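/- arXiv:2003.08128 — 6 statements merged into one kernel-verified Lean document; each statement's English description precedes it below -/
import Mathlib

section
/- For N ≥ L and indices 1 ≤ l_1 < ... < l_L ≤ N with x_1,...,x_N pairwise distinct, the Vandermonde determinant of the N−L variables obtained by removing x_{l_1},...,x_{l_L} equals ∏_{j=1}^L (-1)^{N - l_j} · Δ_N(x_1,...,x_N) · Δ_L(x_{l_1},...,x_{l_L}) / ∏_{j=1}^L ∏_{n=1, n≠l_j}^N (x_n - x_{l_j}). -/
/-- The Vandermonde determinant in product form. -/
def Vand {K : ℕ} (v : Fin K → ℂ) : ℂ := ∏ i : Fin K, ∏ j ∈ Finset.Ioi i, (v i - v j)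

/-!
Write `P(A, B) = ∏_{a ∈ A, b ∈ B, a < b} (x a - x b)`, which is multiplicative in each argument
under disjoint unions. With `S` the removed indices and `T` its complement, every Vandermonde
determinant in the statement is `P(A, A)` for the appropriate index set, so
`Δ_N = P(S,S) P(S,T) P(T,S) P(T,T)`.
Splitting the `j`-th factor of the denominator at `l j` and turning the factors with `n > l j`
around gives `∏_j (-1)^{N - 1 - l j} · P(S, univ) · P(univ, S)`, and all that remains is `P(T, T)`.
-/

open Finset

def orderedPairProd {ι R : Type*} [LinearOrder ι] [CommRing R] (x : ι → R) (A B : Finset ι) :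
    R :=
  ∏ a ∈ A, ∏ b ∈ B with a < b, (x a - x b)

namespace orderedPairProd

variable {ι R : Type*} [LinearOrder ι] [CommRing R] (x : ι → R)

lemma union_left {A B : Finset ι} (C : Finset ι) (h : Disjoint A B) :
    orderedPairProd x (A ∪ B) C = orderedPairProd x A C * orderedPairProd x B C :=
  prod_union h

lemma union_right (A : Finset ι) {B C : Finset ι} (h : Disjoint B C) :
    orderedPairProd x A (B ∪ C) = orderedPairProd x A B * orderedPairProd x A C := by
  rw [orderedPairProd, orderedPairProd, orderedPairProd, ← prod_mul_distrib]
  refine prod_congr rfl fun a _ => ?_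
  rw [filter_union, prod_union (disjoint_filter_filter h)]

lemma eq_prod_prod_gt (A B : Finset ι) :
    orderedPairProd x A B = ∏ b ∈ B, ∏ a ∈ A with a < b, (x a - x b) :=
  prod_comm' fun a b => by simp only [mem_filter]; tauto

lemma ne_zero [IsDomain R] (hx : Function.Injective x) (A B : Finset ι) :
    orderedPairProd x A B ≠ 0 :=
  prod_ne_zero_iff.2 fun _ _ => prod_ne_zero_iff.2 fun _ hb =>
    sub_ne_zero.2 <| hx.ne (mem_filter.1 hb).2.ne

end orderedPairProd

lemma Vand_comp_strictMono {ι : Type*} [LinearOrder ι] {m : ℕ} (x : ι → ℂ) {e : Fin m → ι}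
    (he : StrictMono e) :
    Vand (x ∘ e) = orderedPairProd x (univ.image e) (univ.image e) := by
  have himage (i : Fin m) : (univ.image e).filter (e i < ·) = (Ioi i).image e := by
    ext b
    simp only [mem_filter, mem_image, mem_Ioi, mem_univ, true_and]
    constructor
    · rintro ⟨⟨j, rfl⟩, hij⟩
      exact ⟨j, he.lt_iff_lt.1 hij, rfl⟩
    · rintro ⟨j, hij, rfl⟩
      exact ⟨⟨j, rfl⟩, he hij⟩
  rw [orderedPairProd, prod_image fun _ _ _ _ h => he.injective h]
  refine prod_congr rfl fun i _ => ?_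
  rw [himage, prod_image fun _ _ _ _ h => he.injective h]
  rfl

lemma prod_erase_sub_eq {R : Type*} [CommRing R] {N : ℕ} (x : Fin N → R) (a : Fin N) :
    ∏ n ∈ univ.erase a, (x n - x a)
      = (-1) ^ (N - 1 - (a : ℕ)) *
          ((∏ n ∈ univ with a < n, (x a - x n)) * ∏ n ∈ univ with n < a, (x n - x a)) := by
  have hsplit : univ.erase a = univ.filter (a < ·) ∪ univ.filter (· < a) := by
    ext n
    simp [lt_or_lt_iff_ne, ne_comm]
  have hdisj : Disjoint (univ.filter (a < ·)) (univ.filter (· < a)) :=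
    disjoint_filter.2 fun _ _ => lt_asymm
  have hcard : #(univ.filter (a < ·)) = N - 1 - a := by
    rw [filter_lt_eq_Ioi, Fin.card_Ioi]
  rw [hsplit, prod_union hdisj, ← hcard, ← prod_const, ← mul_assoc, ← prod_mul_distrib]
  congr 1
  exact prod_congr rfl fun _ _ => by ring

theorem vandermonde_reduced_general (N L : ℕ) (x : Fin N → ℂ)
    (hx : Function.Injective x) (l : Fin L → Fin N) (hl : StrictMono l)
    (hcard : ((Finset.image l Finset.univ)ᶜ : Finset (Fin N)).card = N - L) :
    Vand (x ∘ (Finset.image l Finset.univ)ᶜ.orderEmbOfFin hcard)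
      = (∏ j : Fin L, (-1 : ℂ) ^ (N - 1 - (l j : ℕ))) * Vand x * Vand (x ∘ l) /
          ∏ j : Fin L, ∏ n ∈ Finset.univ.erase (l j), (x n - x (l j)) := by
  set S := univ.image l
  have hST : Disjoint S Sᶜ := disjoint_compl_right
  have hVT : Vand (x ∘ Sᶜ.orderEmbOfFin hcard) = orderedPairProd x Sᶜ Sᶜ := by
    rw [Vand_comp_strictMono x (Sᶜ.orderEmbOfFin hcard).strictMono, image_orderEmbOfFin_univ]
  have hVS : Vand (x ∘ l) = orderedPairProd x S S := Vand_comp_strictMono x hl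
  have hVx : Vand x = orderedPairProd x (S ∪ Sᶜ) (S ∪ Sᶜ) := by
    simpa using Vand_comp_strictMono x strictMono_id
  have hden : ∏ j, ∏ n ∈ univ.erase (l j), (x n - x (l j))
      = (∏ j : Fin L, (-1 : ℂ) ^ (N - 1 - (l j : ℕ))) *
          (orderedPairProd x S (S ∪ Sᶜ) * orderedPairProd x (S ∪ Sᶜ) S) := by
    have hinj : Set.InjOn l (univ : Finset (Fin L)) := hl.injective.injOn
    rw [union_compl, orderedPairProd, orderedPairProd.eq_prod_prod_gt, prod_image hinj,
      prod_image hinj]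
    simp only [prod_erase_sub_eq, prod_mul_distrib]
  have hP := orderedPairProd.ne_zero x hx
  have hsign : (∏ j : Fin L, (-1 : ℂ) ^ (N - 1 - (l j : ℕ))) ≠ 0 :=
    prod_ne_zero_iff.2 fun _ _ => pow_ne_zero _ (by norm_num)
  simp only [orderedPairProd.union_left x _ hST, orderedPairProd.union_right x _ hST]
    at hVx hden
  rw [hVT, hVx, hVS, hden]
  field_simp [hP, hsign]

/-- reduced Vandermonde determinant. For `N ≥ L`, strictly increasing indices
`l 1 < ... < l L` and pairwise distinct `x 1, ..., x N`, the Vandermonde determinant of the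
`N - L` variables obtained by removing `x (l 1), ..., x (l L)` (in increasing index order)
equals `∏_j (-1)^{N - l_j} · Δ_N(x) · Δ_L(x_{l_1},...,x_{l_L}) / ∏_j ∏_{n ≠ l_j} (x n - x (l j))`.
(Here indices are zero-based, so the one-based exponent `N - l_j` becomes `N - 1 - l j`.) -/
theorem vandermonde_reduced (N L : ℕ) (hL : L ≤ N) (x : Fin N → ℂ)
    (hx : Function.Injective x) (l : Fin L → Fin N) (hl : StrictMono l)
    (hcard : ((Finset.image l Finset.univ)ᶜ : Finset (Fin N)).card = N - L) :
    Vand (x ∘ (Finset.image l Finset.univ)ᶜ.orderEmbOfFin hcard)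
      = (∏ j : Fin L, (-1 : ℂ) ^ (N - 1 - (l j : ℕ))) * Vand x * Vand (x ∘ l) /
          ∏ j : Fin L, ∏ n ∈ Finset.univ.erase (l j), (x n - x (l j)) :=
  vandermonde_reduced_general N L x hx l hl hcard
end

section
/- Andréief's integration formula: for integrable functions ψ_1,...,ψ_N and φ_1,...,φ_N on an interval I ⊆ ℝ, ∏_{n=1}^N ∫_I dx_n of det[ψ_l(x_k)]_{k,l=1}^N · det[φ_l(x_k)]_{k,l=1}^N equals N! · det[∫_I ψ_k(x) φ_l(x) dx]_{k,l=1}^N. -/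
/-!
Expanding only the first determinant by the Leibniz formula and absorbing each product
`∏ k, ψ (σ k) (x k)` into the rows of the second gives
`det[ψ l (x k)] · det[φ l (x k)] = ∑ σ, sign σ · det[ψ (σ k) (x k) · φ l (x k)]`.
In each summand row `k` depends on `x k` alone, so by multilinearity and Fubini the integral
of the determinant is the determinant of the entrywise integrals, i.e. the Gram matrix
`G = [∫ ψ k φ l]` with rows permuted by `σ`. Its determinant is `sign σ · det G`, and the
signs cancel in each of the `N!` summands.
-/

open MeasureTheory Equiv

namespace Matrix

variable {ι R : Type*} [Fintype ι] [DecidableEq ι] [CommRing R]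

theorem det_eq_sum_sign_mul_prod_row (M : Matrix ι ι R) :
    M.det = ∑ σ : Perm ι, (Perm.sign σ : R) * ∏ k, M k (σ k) := by
  rw [← det_transpose, det_apply']
  rfl

theorem det_mul_det_eq_sum_perm (A B : Matrix ι ι R) :
    A.det * B.det =
      ∑ σ : Perm ι, (Perm.sign σ : R) * (of fun k l => A k (σ k) * B k l).det := by
  rw [det_eq_sum_sign_mul_prod_row A, Finset.sum_mul]
  refine Finset.sum_congr rfl fun σ _ => ?_
  rw [det_mul_column, mul_assoc]

theorem sum_perm_sign_mul_det_submatrix (M : Matrix ι ι R) :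
    ∑ σ : Perm ι, (Perm.sign σ : R) * (M.submatrix σ id).det =
      (Fintype.card ι).factorial * M.det := by
  simp_rw [det_permute, ← mul_assoc, ← Int.cast_mul, ← Units.val_mul, Int.units_mul_self]
  simp [Fintype.card_perm]

end Matrix

section

variable {ι 𝕜 : Type*} [Fintype ι] [DecidableEq ι] [RCLike 𝕜] {E : ι → Type*}
  {mE : ∀ i, MeasurableSpace (E i)} {μ : (i : ι) → Measure (E i)} [∀ i, SigmaFinite (μ i)]
  {f : (k : ι) → ι → E k → 𝕜}

theorem integrable_det_of_rows (hf : ∀ k l, Integrable (f k l) (μ k)) :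
    Integrable (fun x : (k : ι) → E k => (Matrix.of fun k l => f k l (x k)).det)
      (Measure.pi μ) := by
  simp_rw [Matrix.det_eq_sum_sign_mul_prod_row]
  exact integrable_finsetSum _ fun σ _ =>
    (Integrable.fintype_prod_dep fun k => hf k (σ k)).const_mul _

theorem integral_det_of_rows (hf : ∀ k l, Integrable (f k l) (μ k)) :
    ∫ x : (k : ι) → E k, (Matrix.of fun k l => f k l (x k)).det ∂(Measure.pi μ) =
      (Matrix.of fun k l => ∫ t, f k l t ∂(μ k)).det := by
  simp_rw [Matrix.det_eq_sum_sign_mul_prod_row]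
  rw [integral_finsetSum _ fun σ _ =>
    (Integrable.fintype_prod_dep fun k => hf k (σ k)).const_mul _]
  simp_rw [integral_const_mul]
  congr! with σ
  exact integral_fintype_prod_eq_prod fun k => f k (σ k)

end

theorem andreief_formula_general (N : ℕ) (I : Set ℝ)
    (ψ φ : Fin N → ℝ → ℂ)
    (hint : ∀ k l, IntegrableOn (fun t => ψ k t * φ l t) I) :
    (∫ x : Fin N → ℝ,
        Matrix.det (Matrix.of fun k l => ψ l (x k)) *
          Matrix.det (Matrix.of fun k l => φ l (x k))
        ∂(Measure.pi fun _ => volume.restrict I))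
      = (N.factorial : ℂ) *
          Matrix.det (Matrix.of fun k l : Fin N => ∫ t in I, ψ k t * φ l t) := by
  set P := Measure.pi fun _ : Fin N => volume.restrict I
  set G := Matrix.of fun k l : Fin N => ∫ t in I, ψ k t * φ l t
  have hrows : ∀ σ : Perm (Fin N), ∀ k l, IntegrableOn (fun t => ψ (σ k) t * φ l t) I :=
    fun σ k l => hint (σ k) l
  calc _ = ∫ x : Fin N → ℝ, ∑ σ : Perm (Fin N), (Perm.sign σ : ℂ) *
          (Matrix.of fun k l => ψ (σ k) (x k) * φ l (x k)).det ∂P := by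
        simp_rw [Matrix.det_mul_det_eq_sum_perm, Matrix.of_apply]
    _ = ∑ σ : Perm (Fin N), (Perm.sign σ : ℂ) *
          ∫ x : Fin N → ℝ, (Matrix.of fun k l => ψ (σ k) (x k) * φ l (x k)).det ∂P := by
        rw [integral_finsetSum _ fun σ _ => (integrable_det_of_rows (hrows σ)).const_mul _]
        exact Finset.sum_congr rfl fun σ _ => integral_const_mul _ _
    _ = ∑ σ : Perm (Fin N), (Perm.sign σ : ℂ) * (G.submatrix σ id).det := by
        congr! 2 with σ
        exact integral_det_of_rows (hrows σ)
    _ = N.factorial * G.det := by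
        rw [Matrix.sum_perm_sign_mul_det_submatrix, Fintype.card_fin]

/-- Andréief's integration formula. For measurable functions
`ψ 1, ..., ψ N` and `φ 1, ..., φ N` on a measurable set `I ⊆ ℝ` such that all products
`ψ k · φ l` are integrable on `I` and the full integrand is integrable on `I^N`,
`∫_{I^N} det[ψ l (x k)] · det[φ l (x k)] dx = N! · det[∫_I ψ k φ l]`. -/
theorem andreief_formula (N : ℕ) (I : Set ℝ) (hI : MeasurableSet I)
    (ψ φ : Fin N → ℝ → ℂ)
    (hψ : ∀ k, Measurable (ψ k)) (hφ : ∀ k, Measurable (φ k))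
    (hint : ∀ k l, IntegrableOn (fun t => ψ k t * φ l t) I)
    (hint2 : Integrable
      (fun x : Fin N → ℝ =>
        Matrix.det (Matrix.of fun k l => ψ l (x k)) *
          Matrix.det (Matrix.of fun k l => φ l (x k)))
      (Measure.pi fun _ => volume.restrict I)) :
    (∫ x : Fin N → ℝ,
        Matrix.det (Matrix.of fun k l => ψ l (x k)) *
          Matrix.det (Matrix.of fun k l => φ l (x k))
        ∂(Measure.pi fun _ => volume.restrict I))
      = (N.factorial : ℂ) *
          Matrix.det (Matrix.of fun k l : Fin N => ∫ t in I, ψ k t * φ l t) :=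
  andreief_formula_general N I ψ φ hint
end

section
/- Strahov's partial-fraction/Schur identity: for 1 ≤ L ≤ N and pairwise distinct parameters x_1,...,x_N and y_1,...,y_L (with every y_l distinct from every x_n), ∏_{l=1}^L y_l^{N-L}/∏_{n=1}^N (y_l − x_n) = ∑_{σ ∈ S_N/(S_{N−L}×S_L)} [Δ_L(x_{σ(1)},...,x_{σ(L)}) · Δ_{N−L}(x_{σ(L+1)},...,x_{σ(N)}) · ∏_{n=1}^L x_{σ(n)}^{N−L}] / [Δ_N(x_{σ(1)},...,x_{σ(N)}) · ∏_{n,l=1}^L (y_l − x_{σ(n)})], where the sum runs over a complete set of coset representatives. -/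
/-- The coset representative `τ_s ∈ S_N` associated with an `L`-element subset
`s = {l_1 < ... < l_L}` of `{1,...,N}`: it sends `(1,...,L)` to `(l_1,...,l_L)` and
`(L+1,...,N)` to the complement of `s` in increasing order; these permutations form a
complete set of representatives of the cosets `S_N/(S_{N-L} × S_L)`. -/
def tau (N L : ℕ) (hL : L ≤ N) (s : Finset (Fin N)) (hs : s.card = L)
    (hs' : (sᶜ).card = N - L) : Equiv.Perm (Fin N) :=
  (((finCongr (Nat.add_sub_cancel' hL)).symm.trans finSumFinEquiv.symm).trans
    ((Equiv.sumCongr (s.orderIsoOfFin hs).toEquiv ((sᶜ).orderIsoOfFin hs').toEquiv).trans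
      ((Equiv.sumCongr (Equiv.refl _)
          (Equiv.subtypeEquivRight (fun _ => Finset.mem_compl))).trans
        (Equiv.sumCompl (· ∈ s)))))

/-
Clearing the denominators ∏_{l,n} (y_l - x_n), and splitting the Vandermonde determinant of
`x ∘ τ_s` as `Δ_L · Δ_{N-L} · ∏_{m ∈ s, n ∉ s} (x_m - x_n)`, the identity becomes the
multivariate Lagrange interpolation formula
  `∏_l f(y_l) = ∑_{#s = L} (∏_{m ∈ s} f(x_m) / ∏_{n ∉ s} (x_m - x_n)) ∏_l ∏_{n ∉ s} (y_l - x_n)`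
for `f = X^{N-L}`. It holds for every `f` of degree `≤ N - L`: both sides are polynomials of
degree `≤ N - L` in each `y_l` separately, and they agree when `y = x ∘ g` with `g` injective,
since then only `s = g(Fin L)` contributes. Freeing the variables one at a time, the difference
is, in the freed variable, a polynomial of degree `≤ N - L` vanishing at the `≥ N - L + 1`
nodes not occupied by the remaining substituted variables, hence zero.
-/

open Finset Function Polynomial Lagrange

section SeparatelyPolynomial

variable {K ι : Type*} [DecidableEq ι]

def IsSeparatelyPolynomial [CommRing K] (d : ℕ) (F : (ι → K) → K) : Prop :=
  ∀ (y : ι → K) (i : ι), ∃ p : K[X], p.natDegree ≤ d ∧ ∀ t, F (update y i t) = p.eval t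

namespace IsSeparatelyPolynomial

variable [CommRing K] {d : ℕ} {F G : (ι → K) → K}

theorem mono {e : ℕ} (hF : IsSeparatelyPolynomial d F) (hde : d ≤ e) :
    IsSeparatelyPolynomial e F := fun y i =>
  let ⟨p, hp, hpF⟩ := hF y i
  ⟨p, hp.trans hde, hpF⟩

theorem sub (hF : IsSeparatelyPolynomial d F) (hG : IsSeparatelyPolynomial d G) :
    IsSeparatelyPolynomial d (F - G) := fun y i => by
  obtain ⟨p, hp, hpF⟩ := hF y i
  obtain ⟨q, hq, hqG⟩ := hG y i
  exact ⟨p - q, (natDegree_sub_le p q).trans (max_le hp hq), fun t => by simp [hpF, hqG]⟩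

theorem const_mul (c : K) (hF : IsSeparatelyPolynomial d F) :
    IsSeparatelyPolynomial d (fun y => c * F y) := fun y i => by
  obtain ⟨p, hp, hpF⟩ := hF y i
  exact ⟨C c * p, (natDegree_C_mul_le c p).trans hp, fun t => by simp [hpF]⟩

theorem sum {σ : Type*} (s : Finset σ) {F : σ → (ι → K) → K}
    (hF : ∀ j ∈ s, IsSeparatelyPolynomial d (F j)) :
    IsSeparatelyPolynomial d (fun y => ∑ j ∈ s, F j y) := fun y i => by
  choose! p hp hpF using fun j hj => hF j hj y i
  exact ⟨∑ j ∈ s, p j, natDegree_sum_le_of_forall_le s p hp,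
    fun t => by simp only [eval_finsetSum]; exact sum_congr rfl fun j hj => hpF j hj t⟩

end IsSeparatelyPolynomial

theorem isSeparatelyPolynomial_prod_eval [CommRing K] [Fintype ι] (f : K[X]) :
    IsSeparatelyPolynomial f.natDegree (fun y : ι → K => ∏ i, f.eval (y i)) := fun y i =>
  ⟨C (∏ j ∈ univ.erase i, f.eval (y j)) * f, natDegree_C_mul_le _ _, fun t => by
    dsimp only
    rw [← mul_prod_erase univ _ (mem_univ i), eval_mul, eval_C, update_self, mul_comm]
    congr 1
    exact prod_congr rfl fun j hj => by rw [update_of_ne (ne_of_mem_erase hj)]⟩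

theorem IsSeparatelyPolynomial.eq_zero_of_forall_injective {α : Type*} [Field K] [Fintype ι]
    [Fintype α] [DecidableEq α] {d : ℕ} {F : (ι → K) → K} (hF : IsSeparatelyPolynomial d F)
    {x : α → K} (hx : Injective x) (hd : Fintype.card ι + d ≤ Fintype.card α)
    (hF₀ : ∀ g : ι → α, Injective g → F (x ∘ g) = 0) (y : ι → K) : F y = 0 := by
  -- `S` is the set of variables still free; the others sit at pairwise distinct nodes.
  suffices H : ∀ (S : Finset ι) (y : ι → K) (g : ι → α),
      Set.InjOn g (↑S)ᶜ → (∀ i ∉ S, y i = x (g i)) → F y = 0 by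
    obtain ⟨g⟩ :=
      Function.Embedding.nonempty_of_card_le (by omega : Fintype.card ι ≤ Fintype.card α)
    exact H univ y g (by simp) (by simp)
  intro S
  induction S using Finset.induction_on with
  | empty =>
    intro y g hg hy
    obtain rfl : y = x ∘ g := funext fun i => hy i (notMem_empty i)
    exact hF₀ g (by simpa using hg)
  | insert i S hi ih =>
    intro y g hg hy
    obtain ⟨p, hpd, hpF⟩ := hF y i
    set T := (univ.erase i).image g
    have hroot : ∀ m ∉ T, p.eval (x m) = 0 := by
      intro m hm
      rw [← hpF]
      refine ih _ (update g i m) ?_ ?_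
      · have hmT : ∀ j ≠ i, g j ≠ m := fun j hj h => hm (mem_image.mpr ⟨j, by simpa, h⟩)
        intro j hj k hk hjk
        simp only [update_apply] at hjk
        split_ifs at hjk with hji hki hki
        · rw [hji, hki]
        · exact absurd hjk.symm (hmT k hki)
        · exact absurd hjk (hmT j hji)
        · exact hg (by simp_all) (by simp_all) hjk
      · intro j hj
        rcases eq_or_ne j i with rfl | hji
        · simp
        · rw [update_of_ne hji, update_of_ne hji]
          exact hy j (by simp [hji, hj])
    have hp : p = 0 := by
      refine eq_zero_of_natDegree_lt_card_of_eval_eq_zero' p (Tᶜ.map ⟨x, hx⟩)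
        (by simpa using hroot) ?_
      rw [card_map, card_compl]
      have : #T ≤ Fintype.card ι - 1 := card_image_le.trans (by simp)
      have : 0 < Fintype.card ι := Fintype.card_pos_iff.mpr ⟨i⟩
      omega
    simpa [hp] using hpF (y i)

end SeparatelyPolynomial

section Interpolation

variable {K α ι : Type*} [Field K] [Fintype α] [DecidableEq α] [Fintype ι] {L : ℕ}

theorem sum_prod_eval_nodal_comp_injective (hι : Fintype.card ι = L) {x : α → K}
    (hx : Injective x) (f : K[X]) {g : ι → α} (hg : Injective g) :
    ∑ s : {s : Finset α // #s = L}, (∏ m ∈ s.1, f.eval (x m) / (nodal s.1ᶜ x).eval (x m)) *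
      ∏ i, (nodal s.1ᶜ x).eval (x (g i)) = ∏ i, f.eval (x (g i)) := by
  have hs₀ : #(univ.image g) = L := by rw [card_image_of_injective _ hg, card_univ, hι]
  rw [Fintype.sum_eq_single ⟨univ.image g, hs₀⟩]
  · rw [prod_image hg.injOn, ← prod_mul_distrib]
    refine prod_congr rfl fun i _ => div_mul_cancel₀ _ ?_
    exact eval_nodal_not_at_node fun m hm => hx.ne fun h => mem_compl.1 hm (h ▸ by simp)
  · rintro ⟨s, hs⟩ hne
    obtain ⟨i, hi⟩ : ∃ i, g i ∉ s := by
      by_contra! hsub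
      exact hne (Subtype.ext (eq_of_subset_of_card_le (by simpa [subset_iff] using hsub)
        (by rw [hs, hs₀])).symm)
    rw [prod_eq_zero (mem_univ i) (eval_nodal_at_node (mem_compl.2 hi)), mul_zero]

theorem prod_eval_eq_sum_prod_eval_nodal (hι : Fintype.card ι = L) {x : α → K}
    (hx : Injective x) (f : K[X]) (hf : f.natDegree + L ≤ Fintype.card α) (y : ι → K) :
    ∏ i, f.eval (y i) = ∑ s : {s : Finset α // #s = L},
      (∏ m ∈ s.1, f.eval (x m) / (nodal s.1ᶜ x).eval (x m)) * ∏ i, (nodal s.1ᶜ x).eval (y i) := by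
  classical
  have hnodal (s : {s : Finset α // #s = L}) :
      (nodal s.1ᶜ x).natDegree = Fintype.card α - L := by
    rw [natDegree_nodal, card_compl, s.2]
  have hsep : IsSeparatelyPolynomial (Fintype.card α - L) fun y : ι → K =>
      ∏ i, f.eval (y i) - ∑ s : {s : Finset α // #s = L},
        (∏ m ∈ s.1, f.eval (x m) / (nodal s.1ᶜ x).eval (x m)) * ∏ i, (nodal s.1ᶜ x).eval (y i) :=
    ((isSeparatelyPolynomial_prod_eval f).mono (by omega)).sub
      (IsSeparatelyPolynomial.sum _ fun s _ =>
        ((isSeparatelyPolynomial_prod_eval _).mono (hnodal s).le).const_mul _)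
  exact sub_eq_zero.1 (hsep.eq_zero_of_forall_injective hx (by omega)
    (fun g hg => sub_eq_zero.2 (sum_prod_eval_nodal_comp_injective hι hx f hg).symm) y)

end Interpolation

theorem Vand_eq_prod_ite {K : ℕ} (v : Fin K → ℂ) :
    Vand v = ∏ i, ∏ j, if i < j then v i - v j else 1 := by
  simp only [Vand, ← prod_filter, filter_lt_eq_Ioi]

theorem Vand_append (a b : ℕ) (v : Fin (a + b) → ℂ) :
    Vand v = Vand (v ∘ Fin.castAdd b) * Vand (v ∘ Fin.natAdd a) *
      ∏ i, ∏ j, (v (Fin.castAdd b i) - v (Fin.natAdd a j)) := by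
  have hlt (i : Fin a) (j : Fin b) : Fin.castAdd b i < Fin.natAdd a j := by
    simp only [Fin.lt_def, Fin.val_castAdd, Fin.val_natAdd]; omega
  simp only [Vand_eq_prod_ite, Fin.prod_univ_add, hlt, (hlt _ _).not_gt,
    (Fin.strictMono_castAdd b).lt_iff_lt, Fin.natAdd_lt_natAdd_iff, if_true, if_false,
    prod_const_one, mul_one, prod_mul_distrib, comp_apply]
  ring

theorem Vand_comp_cast {K K' : ℕ} (h : K' = K) (v : Fin K → ℂ) :
    Vand (v ∘ Fin.cast h) = Vand v := by
  subst h
  rfl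

theorem Vand_ne_zero {K : ℕ} {v : Fin K → ℂ} (hv : Injective v) : Vand v ≠ 0 :=
  prod_ne_zero_iff.2 fun _ _ => prod_ne_zero_iff.2 fun _ hj =>
    sub_ne_zero.2 (hv.ne (mem_Ioi.1 hj).ne)

theorem Finset.prod_orderIsoOfFin {M α : Type*} [CommMonoid M] [LinearOrder α] {k : ℕ}
    (s : Finset α) (hs : #s = k) (f : α → M) : ∏ i, f (s.orderIsoOfFin hs i) = ∏ m ∈ s, f m :=
  ((s.orderIsoOfFin hs).toEquiv.prod_comp (fun m : s => f m)).trans (prod_coe_sort s f)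

section tau

variable {N L : ℕ} (hL : L ≤ N) {s : Finset (Fin N)} (hs : #s = L) (hs' : #sᶜ = N - L)

theorem tau_apply_castLE (i : Fin L) :
    tau N L hL s hs hs' (Fin.castLE hL i) = s.orderIsoOfFin hs i := by
  have : (finCongr (Nat.add_sub_cancel' hL)).symm (Fin.castLE hL i) = Fin.castAdd (N - L) i := by
    ext; simp
  simp only [tau, Equiv.trans_apply, this, finSumFinEquiv_symm_apply_castAdd]
  simp

theorem tau_apply_natAdd (j : Fin (N - L)) :
    tau N L hL s hs hs' (Fin.cast (Nat.add_sub_cancel' hL) (Fin.natAdd L j))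
      = sᶜ.orderIsoOfFin hs' j := by
  have : (finCongr (Nat.add_sub_cancel' hL)).symm
      (Fin.cast (Nat.add_sub_cancel' hL) (Fin.natAdd L j)) = Fin.natAdd L j := by
    ext; simp
  simp only [tau, Equiv.trans_apply, this, finSumFinEquiv_symm_apply_natAdd]
  simp

theorem prod_tau_castLE {M : Type*} [CommMonoid M] (f : Fin N → M) :
    ∏ i, f (tau N L hL s hs hs' (Fin.castLE hL i)) = ∏ m ∈ s, f m := by
  simp only [tau_apply_castLE, prod_orderIsoOfFin]

theorem Vand_comp_tau (x : Fin N → ℂ) :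
    Vand (x ∘ tau N L hL s hs hs') =
      Vand (fun i : Fin L => x (tau N L hL s hs hs' (Fin.castLE hL i))) *
        Vand (fun j : Fin (N - L) =>
          x (tau N L hL s hs hs' (Fin.cast (Nat.add_sub_cancel' hL) (Fin.natAdd L j)))) *
        ∏ m ∈ s, ∏ n ∈ sᶜ, (x m - x n) := by
  have hcast (i : Fin L) :
      Fin.cast (Nat.add_sub_cancel' hL) (Fin.castAdd (N - L) i) = Fin.castLE hL i := by
    ext; simp
  rw [← Vand_comp_cast (Nat.add_sub_cancel' hL), Vand_append]
  have hcross : ∏ i : Fin L, ∏ j : Fin (N - L), (x (tau N L hL s hs hs' (Fin.castLE hL i)) -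
      x (tau N L hL s hs hs' (Fin.cast (Nat.add_sub_cancel' hL) (Fin.natAdd L j))))
      = ∏ m ∈ s, ∏ n ∈ sᶜ, (x m - x n) := by
    simp only [tau_apply_castLE, tau_apply_natAdd]
    exact (prod_orderIsoOfFin s hs (fun m => ∏ j, (x m - x (sᶜ.orderIsoOfFin hs' j)))).trans
      (prod_congr rfl fun m _ => prod_orderIsoOfFin sᶜ hs' (fun n => x m - x n))
  simp only [comp_apply, hcast, hcross]
  rfl

end tau

/-- Strahov's partial-fraction/Schur identity. For `1 ≤ L ≤ N` and pairwise
distinct parameters `x 1, ..., x N` and `y 1, ..., y L` with every `y l` distinct from every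
`x n`:
`∏_l y_l^{N-L}/∏_n (y_l - x_n)
  = ∑_{σ ∈ S_N/(S_{N-L}×S_L)} Δ_L(x_{σ(1)},...,x_{σ(L)}) Δ_{N-L}(x_{σ(L+1)},...,x_{σ(N)})
      ∏_{n=1}^L x_{σ(n)}^{N-L} / (Δ_N(x_{σ(1)},...,x_{σ(N)}) ∏_{n,l=1}^L (y_l - x_{σ(n)}))`,
the sum running over the coset representatives `τ_s` indexed by `L`-element subsets `s`. -/
theorem strahov_identity (N L : ℕ) (hL : L ≤ N)
    (x : Fin N → ℂ) (y : Fin L → ℂ)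
    (hx : Function.Injective x)
    (hxy : ∀ l n, y l ≠ x n) :
    (∏ l : Fin L, y l ^ (N - L) / ∏ n : Fin N, (y l - x n))
      = ∑ s : {s : Finset (Fin N) // s.card = L},
          (Vand (fun i : Fin L =>
              x (tau N L hL s.1 s.2 (by simp [Finset.card_compl, s.2]) (Fin.castLE hL i))) *
            Vand (fun i : Fin (N - L) =>
              x (tau N L hL s.1 s.2 (by simp [Finset.card_compl, s.2])
                (Fin.cast (Nat.add_sub_cancel' hL) (Fin.natAdd L i)))) *
            ∏ n : Fin L,
              x (tau N L hL s.1 s.2 (by simp [Finset.card_compl, s.2])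
                (Fin.castLE hL n)) ^ (N - L)) /
          (Vand (x ∘ tau N L hL s.1 s.2 (by simp [Finset.card_compl, s.2])) *
            ∏ n : Fin L, ∏ l : Fin L,
              (y l - x (tau N L hL s.1 s.2 (by simp [Finset.card_compl, s.2])
                (Fin.castLE hL n)))) := by
  have key := prod_eval_eq_sum_prod_eval_nodal (Fintype.card_fin L) hx (X ^ (N - L))
    (by rw [natDegree_X_pow, Fintype.card_fin]; omega) y
  simp only [eval_pow, eval_X, eval_nodal] at key
  rw [prod_div_distrib, key, sum_div]
  refine sum_congr rfl fun ⟨s, hs⟩ _ => ?_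
  have hs' : #sᶜ = N - L := by rw [card_compl, hs, Fintype.card_fin]
  have hV₁ : Vand (fun i : Fin L => x (tau N L hL s hs hs' (Fin.castLE hL i))) ≠ 0 :=
    Vand_ne_zero (hx.comp ((tau N L hL s hs hs').injective.comp (Fin.castLE_injective hL)))
  have hV₂ : Vand (fun j : Fin (N - L) =>
      x (tau N L hL s hs hs' (Fin.cast (Nat.add_sub_cancel' hL) (Fin.natAdd L j)))) ≠ 0 :=
    Vand_ne_zero (hx.comp ((tau N L hL s hs hs').injective.comp
      ((Fin.cast_injective _).comp (Fin.natAdd_injective _ L))))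
  have hM : ∏ m ∈ s, ∏ n ∈ sᶜ, (x m - x n) ≠ 0 := prod_ne_zero_iff.2 fun m hm =>
    prod_ne_zero_iff.2 fun n hn => sub_ne_zero.2 (hx.ne fun h => mem_compl.1 hn (h ▸ hm))
  have hY (t : Finset (Fin N)) : ∏ l, ∏ n ∈ t, (y l - x n) ≠ 0 :=
    prod_ne_zero_iff.2 fun l _ => prod_ne_zero_iff.2 fun n _ => sub_ne_zero.2 (hxy l n)
  have hsplit (l : Fin L) : ∏ n, (y l - x n) = (∏ n ∈ s, (y l - x n)) * ∏ n ∈ sᶜ, (y l - x n) :=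
    (prod_mul_prod_compl s _).symm
  rw [Vand_comp_tau hL hs hs' x, prod_tau_castLE hL hs hs' (fun m => x m ^ (N - L)),
    prod_tau_castLE hL hs hs' (fun m => ∏ l, (y l - x m)),
    prod_comm (s := s) (t := univ) (f := fun m l => y l - x m)]
  simp only [hsplit, prod_mul_distrib, prod_div_distrib]
  field_simp [hY s, hY sᶜ]
end

section
/- Macdonald's Giambelli lemma: let {h_{r,s}} (r ∈ ℤ, s ∈ ℕ) be commuting indeterminates (elements of a commutative ring) with h_{0,s} = 1 for all s and h_{r,s} = 0 for r < 0. Define, for a Young diagram λ and any k ≥ ℓ(λ), s̃_λ = det[h_{λ_i − i + j, j−1}]_{i,j=1}^k. Then s̃_λ = det[s̃_{(p_i|q_j)}]_{i,j=1}^d, where λ = (p_1,...,p_d | q_1,...,q_d) in Frobenius coordinates. -/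
/-- The Jacobi–Trudi-style determinant `det[h_{λ_i − i + j, j−1}]_{i,j=1}^k` (here written
with zero-based indices `I = i-1`, `J = j-1`, so the `(I,J)` entry is `h (λ_{I+1} - I + J) J`). -/
def stilde {R : Type*} [CommRing R] (h : ℤ → ℕ → R) (l : ℕ → ℕ) (k : ℕ) : R :=
  Matrix.det (Matrix.of fun I J : Fin k => h ((l I : ℤ) - (I : ℕ) + (J : ℕ)) (J : ℕ))

/-- The hook partition `(p | q)` in Frobenius coordinates, i.e. the partition
`(p+1, 1, 1, ..., 1)` with `q` trailing ones (zero-based part index). -/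
def hookP (p q : ℕ) : ℕ → ℕ := fun I => if I = 0 then p + 1 else if I ≤ q then 1 else 0

/-- The Frobenius rank `d(λ)`: the number of diagonal boxes, i.e. of indices `i` (zero-based)
with `λ_{i+1} > i`, for a partition of length at most `L`. -/
def frobRank (l : ℕ → ℕ) (L : ℕ) : ℕ := ((Finset.range L).filter fun i => i < l i).card

/-- The Frobenius arm length `p_i = λ_i − i` (one-based), i.e. `l i − (i+1)` zero-based. -/
def frobArm (l : ℕ → ℕ) (i : ℕ) : ℕ := l i - (i + 1)

/-- The Frobenius leg length `q_i = λ'_i − i` (one-based), i.e. zero-based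
`#{m : λ_{m+1} ≥ i+1} − (i+1)`, for a partition of length at most `L`. -/
def frobLeg (l : ℕ → ℕ) (L : ℕ) (i : ℕ) : ℕ :=
  ((Finset.range L).filter fun m => i + 1 ≤ l m).card - (i + 1)

namespace MG

open Finset Matrix Equiv

variable {R : Type*} [CommRing R]

/-- A downward-closed finset of naturals is an initial segment. -/
lemma mem_iff_lt_card {S : Finset ℕ} (hS : ∀ x ∈ S, ∀ y, y < x → y ∈ S) (x : ℕ) :
    x ∈ S ↔ x < S.card := by
  constructor
  · intro hx
    have hsub : Finset.range (x + 1) ⊆ S := by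
      intro y hy
      rcases Nat.lt_succ_iff_lt_or_eq.mp (Finset.mem_range.mp hy) with h | rfl
      · exact hS x hx y h
      · exact hx
    have := Finset.card_le_card hsub
    simp only [Finset.card_range] at this
    omega
  · intro hx
    by_contra hxS
    have hsub : S ⊆ Finset.range x := by
      intro y hy
      rw [Finset.mem_range]
      by_contra hyx
      push_neg at hyx
      rcases eq_or_lt_of_le hyx with rfl | hlt
      · exact hxS hy
      · exact hxS (hS y hy x hlt)
    have := Finset.card_le_card hsub
    simp only [Finset.card_range] at this
    omega

/-- Sum of a vector against a column of the adjugate computes a row-replacement determinant. -/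
lemma sum_mul_adjugate {n : Type*} [DecidableEq n] [Fintype n] {R : Type*} [CommRing R]
    (T : Matrix n n R) (u : n → R) (J : n) :
    ∑ m, u m * adjugate T m J = (T.updateRow J u).det := by
  have h1 : ∀ m, u m * adjugate T m J = cramer Tᵀ (Pi.single m (u m)) J := by
    intro m
    rw [adjugate_def, of_apply, ← smul_eq_mul, ← Pi.smul_apply, ← _root_.map_smul (Tᵀ.cramer), ← Pi.single_smul',
      smul_eq_mul, mul_one]
  simp_rw [h1]
  have h3 := sum_cramer_apply Tᵀ Finset.univ (fun (j : n) (m : n) => (Pi.single m (u m) : n → R) j) J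
  rw [h3]
  have h2 : (fun j => ∑ m, Pi.single m (u m) j) = u := by
    funext j
    simp [Pi.single_apply]
  rw [h2, cramer_apply, updateCol_transpose, det_transpose]

lemma perm_strictMono_apply {k : ℕ} (σ : Equiv.Perm (Fin k)) (h : StrictMono ⇑σ) (x : Fin k) :
    σ x = x := by
  let e : Fin k ≃o Fin k := { toEquiv := σ, map_rel_iff' := @fun a b => h.le_iff_le }
  have he : e = OrderIso.refl (Fin k) := Subsingleton.elim _ _
  have hx : e x = x := by rw [he]; rfl
  exact hx

lemma sign_formula (d : ℕ) : ∀ (k : ℕ) (hd : d ≤ k) (σ : Equiv.Perm (Fin k)),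
    (∀ i j : Fin k, i < j → (j : ℕ) < d → σ j < σ i) →
    (∀ i j : Fin k, d ≤ (i : ℕ) → i < j → σ i < σ j) →
    Equiv.Perm.sign σ = (-1) ^ (∑ i : Fin d, (σ (Fin.castLE hd i) : ℕ)) := by
  induction d with
  | zero =>
    intro k hd σ _ htail
    have hmono : StrictMono ⇑σ := fun i j hij => htail i j (Nat.zero_le _) hij
    have hσ : σ = 1 := Equiv.ext fun x => perm_strictMono_apply σ hmono x
    simp [hσ]
  | succ d ih =>
    intro k hd σ hhead htail
    obtain ⟨m, rfl⟩ : ∃ m, k = m + 1 := ⟨k - 1, by omega⟩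
    have hdm : d ≤ m := by omega
    set dF : Fin (m + 1) := ⟨d, by omega⟩ with hdF
    have hdFval : (dF : ℕ) = d := rfl
    have hnegval : ((-dF : Fin (m + 1)) : ℕ) = (m + 1 - d) % (m + 1) := rfl
    set q : Fin (m + 1) := σ dF with hq
    clear_value dF
    clear_value q
    have hheadq : ∀ x : Fin (m + 1), (x : ℕ) < d → q < σ x := by
      intro x hx
      rw [hq]
      exact hhead x dF (by rw [Fin.lt_def]; omega) (by omega)
    set S0 : Finset (Fin (m + 1)) := Finset.univ.filter (fun x => σ x < q) with hS0
    have hS0mem : ∀ x ∈ S0, d < (x : ℕ) := by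
      intro x hx
      rw [hS0, Finset.mem_filter] at hx
      rcases lt_trichotomy ((x : ℕ)) d with h | h | h
      · exact absurd (lt_trans (hheadq x h) hx.2) (lt_irrefl _)
      · exfalso
        have hx' : x = dF := Fin.ext (by rw [hdFval]; exact h)
        rw [hx', ← hq] at hx
        exact lt_irrefl _ hx.2
      · exact h
    have hS0card : S0.card = (q : ℕ) := by
      have himg : S0 = (Finset.univ.filter (fun y : Fin (m + 1) => y < q)).image ⇑σ.symm := by
        ext x
        simp only [hS0, Finset.mem_filter, Finset.mem_image, Finset.mem_univ, true_and]
        constructor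
        · intro hx
          exact ⟨σ x, hx, σ.symm_apply_apply x⟩
        · rintro ⟨y, hy, rfl⟩
          simpa using hy
      rw [himg, Finset.card_image_of_injective _ σ.symm.injective]
      have hiio : Finset.univ.filter (fun y : Fin (m + 1) => y < q) = Finset.Iio q := by
        ext y; simp
      rw [hiio, Fin.card_Iio]
    set S1 : Finset ℕ := S0.image (fun x : Fin (m + 1) => (x : ℕ) - (d + 1)) with hS1def
    have hS1card : S1.card = (q : ℕ) := by
      rw [hS1def, Finset.card_image_of_injOn, hS0card]
      intro x hx y hy hxy
      have hxy' : (x : ℕ) - (d + 1) = (y : ℕ) - (d + 1) := hxy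
      have hx' := hS0mem x hx
      have hy' := hS0mem y hy
      exact Fin.ext (by omega)
    have hS1dc : ∀ t ∈ S1, ∀ y, y < t → y ∈ S1 := by
      intro t ht y hyt
      rw [hS1def, Finset.mem_image] at ht
      obtain ⟨x, hxS0, hxt⟩ := ht
      have hxt' : (x : ℕ) - (d + 1) = t := hxt
      have hdx := hS0mem x hxS0
      have hxk : (x : ℕ) < m + 1 := x.isLt
      set x' : Fin (m + 1) := ⟨d + 1 + y, by omega⟩ with hx'
      have hσx' : σ x' < σ x :=
        htail x' x (by show d + 1 ≤ d + 1 + y; omega)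
          (by rw [Fin.lt_def]; show d + 1 + y < (x : ℕ); omega)
      have hx'S0 : x' ∈ S0 := by
        rw [hS0, Finset.mem_filter]
        rw [hS0, Finset.mem_filter] at hxS0
        exact ⟨Finset.mem_univ _, lt_trans hσx' hxS0.2⟩
      rw [hS1def, Finset.mem_image]
      exact ⟨x', hx'S0, by show d + 1 + y - (d + 1) = y; omega⟩
    have hS1 : ∀ y, y ∈ S1 ↔ y < (q : ℕ) := by
      intro y; rw [mem_iff_lt_card hS1dc, hS1card]
    have hcount : ∀ x : Fin (m + 1), d < (x : ℕ) → (σ x < q ↔ (x : ℕ) ≤ d + q) := by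
      intro x hx
      constructor
      · intro hlt
        have hxS0 : x ∈ S0 := by rw [hS0, Finset.mem_filter]; exact ⟨Finset.mem_univ _, hlt⟩
        have hmem : (x : ℕ) - (d + 1) ∈ S1 := by
          rw [hS1def, Finset.mem_image]; exact ⟨x, hxS0, rfl⟩
        rw [hS1 _] at hmem
        omega
      · intro hle
        have hmem : (x : ℕ) - (d + 1) ∈ S1 := (hS1 _).mpr (by omega)
        rw [hS1def, Finset.mem_image] at hmem
        obtain ⟨x'', hx''S0, hx''⟩ := hmem
        have hx''' : (x'' : ℕ) - (d + 1) = (x : ℕ) - (d + 1) := hx''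
        have hd'' := hS0mem x'' hx''S0
        have hxx : x'' = x := Fin.ext (by omega)
        rw [hxx] at hx''S0
        rw [hS0, Finset.mem_filter] at hx''S0
        exact hx''S0.2
    have hbound : (q : ℕ) + d + 1 ≤ m + 1 := by
      rcases Nat.eq_zero_or_pos (q : ℕ) with h0 | hpos
      · omega
      · have hmem : (q : ℕ) - 1 ∈ S1 := (hS1 _).mpr (by omega)
        rw [hS1def, Finset.mem_image] at hmem
        obtain ⟨x, hxS0, hx⟩ := hmem
        have hx' : (x : ℕ) - (d + 1) = (q : ℕ) - 1 := hx
        have h1 := hS0mem x hxS0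
        have h2 := x.isLt
        omega
    have hgt : ∀ x : Fin (m + 1), d + (q : ℕ) < (x : ℕ) → q < σ x := by
      intro x hx
      have h1 : ¬ σ x < q := by
        rw [hcount x (by omega)]; omega
      have h2 : σ x ≠ q := by
        intro hceq
        have hxd : x = dF := σ.injective (by rw [hceq, hq])
        rw [Fin.ext_iff, hdFval] at hxd
        omega
      rcases lt_trichotomy (σ x) q with h | h | h
      · exact absurd h h1
      · exact absurd h h2
      · exact h
    -- the cycle
    set c : Equiv.Perm (Fin (m + 1)) := (Equiv.addLeft dF).permCongr (Fin.cycleRange q) with hc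
    clear_value c
    have hcapp : ∀ x : Fin (m + 1), c x = dF + (Fin.cycleRange q (-dF + x)) := by
      intro x
      rw [hc, Equiv.permCongr_apply, Equiv.addLeft_symm]
      rfl
    have hsubval : ∀ x : Fin (m + 1),
        ((-dF + x : Fin (m + 1)) : ℕ) = ((x : ℕ) + (m + 1 - d)) % (m + 1) := by
      intro x
      rw [Fin.val_add, hnegval, Nat.mod_add_mod, Nat.add_comm]
    have hc1 : ∀ x : Fin (m + 1), (x : ℕ) < d → c x = x := by
      intro x hx
      rw [hcapp]
      have hv : ((-dF + x : Fin (m + 1)) : ℕ) = (x : ℕ) + (m + 1 - d) := by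
        rw [hsubval, Nat.mod_eq_of_lt (by omega)]
      have hgtq : q < (-dF + x) := by rw [Fin.lt_def, hv]; omega
      rw [Fin.cycleRange_of_gt hgtq]
      apply Fin.ext
      rw [Fin.val_add, hdFval, hv]
      have h3 : d + ((x : ℕ) + (m + 1 - d)) = (x : ℕ) + (m + 1) := by omega
      rw [h3, Nat.add_mod_right, Nat.mod_eq_of_lt x.isLt]
    have hc2 : ∀ x : Fin (m + 1), d ≤ (x : ℕ) → (x : ℕ) < d + (q : ℕ) →
        ∀ y : Fin (m + 1), (y : ℕ) = (x : ℕ) + 1 → c x = y := by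
      intro x hx1 hx2 y hy
      rw [hcapp]
      have hv : ((-dF + x : Fin (m + 1)) : ℕ) = (x : ℕ) - d := by
        rw [hsubval]
        have h3 : (x : ℕ) + (m + 1 - d) = ((x : ℕ) - d) + (m + 1) := by omega
        rw [h3, Nat.add_mod_right, Nat.mod_eq_of_lt (by omega)]
      have hlt : (-dF + x) < q := by rw [Fin.lt_def, hv]; omega
      apply Fin.ext
      rw [Fin.val_add, Fin.coe_cycleRange_of_lt hlt, hv, hdFval, hy,
        Nat.mod_eq_of_lt (by omega)]
      omega
    have hc3 : ∀ x : Fin (m + 1), (x : ℕ) = d + (q : ℕ) → c x = dF := by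
      intro x hx
      rw [hcapp]
      have hv : (-dF + x : Fin (m + 1)) = q := by
        apply Fin.ext
        rw [hsubval]
        have h3 : (x : ℕ) + (m + 1 - d) = (q : ℕ) + (m + 1) := by omega
        rw [h3, Nat.add_mod_right, Nat.mod_eq_of_lt (by omega)]
      rw [hv, Fin.cycleRange_self]
      apply Fin.ext
      rw [Fin.val_add, hdFval, Fin.val_zero, Nat.add_zero, Nat.mod_eq_of_lt (by omega)]
    have hc4 : ∀ x : Fin (m + 1), d + (q : ℕ) < (x : ℕ) → c x = x := by
      intro x hx
      rw [hcapp]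
      have hv : ((-dF + x : Fin (m + 1)) : ℕ) = (x : ℕ) - d := by
        rw [hsubval]
        have h3 : (x : ℕ) + (m + 1 - d) = ((x : ℕ) - d) + (m + 1) := by omega
        rw [h3, Nat.add_mod_right, Nat.mod_eq_of_lt (by omega)]
      have hgtq : q < (-dF + x) := by rw [Fin.lt_def, hv]; omega
      rw [Fin.cycleRange_of_gt hgtq]
      apply Fin.ext
      rw [Fin.val_add, hdFval, hv]
      have h3 : d + ((x : ℕ) - d) = (x : ℕ) := by omega
      rw [h3, Nat.mod_eq_of_lt x.isLt]
    set σ' : Equiv.Perm (Fin (m + 1)) := σ * c with hσ'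
    clear_value σ'
    have hr1 : ∀ x y : Fin (m + 1), d ≤ (x : ℕ) → (x : ℕ) < d + (q : ℕ) →
        (y : ℕ) = (x : ℕ) + 1 → σ' x = σ y := by
      intro x y h1 h2 hy
      rw [hσ', Equiv.Perm.mul_apply, hc2 x h1 h2 y hy]
    have hr1q : ∀ x : Fin (m + 1), d ≤ (x : ℕ) → (x : ℕ) < d + (q : ℕ) → σ' x < q := by
      intro x h1 h2
      have hxm : (x : ℕ) + 1 < m + 1 := by omega
      rw [hr1 x ⟨(x : ℕ) + 1, hxm⟩ h1 h2 rfl]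
      exact (hcount ⟨(x : ℕ) + 1, hxm⟩ (by show d < (x : ℕ) + 1; omega)).mpr
        (by show (x : ℕ) + 1 ≤ d + (q : ℕ); omega)
    have hr2 : ∀ x : Fin (m + 1), (x : ℕ) = d + (q : ℕ) → σ' x = q := by
      intro x hx
      rw [hσ', Equiv.Perm.mul_apply, hc3 x hx, hq]
    have hr3 : ∀ x : Fin (m + 1), d + (q : ℕ) < (x : ℕ) → σ' x = σ x := by
      intro x hx
      rw [hσ', Equiv.Perm.mul_apply, hc4 x hx]
    have hh' : ∀ i j : Fin (m + 1), i < j → (j : ℕ) < d → σ' j < σ' i := by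
      intro i j hij hjd
      have hid : (i : ℕ) < d := lt_trans (Fin.lt_def.mp hij) hjd
      rw [hσ', Equiv.Perm.mul_apply, Equiv.Perm.mul_apply, hc1 i hid, hc1 j hjd]
      exact hhead i j hij (by omega)
    have ht' : ∀ i j : Fin (m + 1), d ≤ (i : ℕ) → i < j → σ' i < σ' j := by
      intro i j h1 h2
      rw [Fin.lt_def] at h2
      have hj1 : d ≤ (j : ℕ) := by omega
      rcases lt_trichotomy ((i : ℕ)) (d + (q : ℕ)) with hi | hi | hi
      · rcases lt_trichotomy ((j : ℕ)) (d + (q : ℕ)) with hj | hj | hj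
        · have him : (i : ℕ) + 1 < m + 1 := by omega
          have hjm : (j : ℕ) + 1 < m + 1 := by omega
          rw [hr1 i ⟨(i : ℕ) + 1, him⟩ h1 hi rfl, hr1 j ⟨(j : ℕ) + 1, hjm⟩ hj1 hj rfl]
          exact htail _ _ (by show d + 1 ≤ (i : ℕ) + 1; omega)
            (by rw [Fin.lt_def]; show (i : ℕ) + 1 < (j : ℕ) + 1; omega)
        · rw [hr2 j hj]
          exact hr1q i h1 hi
        · rw [hr3 j hj]
          exact lt_trans (hr1q i h1 hi) (hgt j hj)
      · have hj : d + (q : ℕ) < (j : ℕ) := by omega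
        rw [hr2 i hi, hr3 j hj]
        exact hgt j hj
      · have hj : d + (q : ℕ) < (j : ℕ) := by omega
        rw [hr3 i (by omega), hr3 j hj]
        exact htail i j (by omega) (Fin.lt_def.mpr h2)
    have hih := ih (m + 1) (by omega) σ' hh' ht'
    have hsc : Equiv.Perm.sign c = (-1) ^ (q : ℕ) := by
      rw [hc, Equiv.Perm.sign_permCongr, Fin.sign_cycleRange]
    have hσeq : σ = σ' * c⁻¹ := by rw [hσ']; group
    have hsign : Equiv.Perm.sign σ = Equiv.Perm.sign σ' * (-1) ^ (q : ℕ) := by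
      rw [hσeq, Equiv.Perm.sign_mul, Equiv.Perm.sign_inv, hsc]
    rw [hsign, hih]
    rw [Fin.sum_univ_castSucc]
    have hlast : (Fin.castLE hd (Fin.last d)) = dF := Fin.ext (by rw [hdFval]; rfl)
    have hcast : ∀ i : Fin d, (σ' (Fin.castLE (by omega : d ≤ m + 1) i) : ℕ)
        = (σ (Fin.castLE hd (Fin.castSucc i)) : ℕ) := by
      intro i
      have h1 : (Fin.castLE (by omega : d ≤ m + 1) i) = (Fin.castLE hd (Fin.castSucc i)) :=
        Fin.ext rfl
      rw [hσ', Equiv.Perm.mul_apply, hc1 _ (by show (i : ℕ) < d; exact i.isLt), h1]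
    rw [Finset.sum_congr rfl (fun i _ => hcast i), hlast, ← hq, ← pow_add]

lemma stilde_succ (h : ℤ → ℕ → R) (h0 : ∀ s, h 0 s = 1)
    (hneg : ∀ r : ℤ, r < 0 → ∀ s, h r s = 0) (l : ℕ → ℕ) (m : ℕ) (hm : l m = 0) :
    stilde h l (m + 1) = stilde h l m := by
  unfold stilde
  rw [← Matrix.det_submatrix_equiv_self (finSumFinEquiv : Fin m ⊕ Fin 1 ≃ Fin (m + 1))]
  have hsub : (Matrix.of fun I J : Fin (m + 1) => h ((l I : ℤ) - (I : ℕ) + (J : ℕ)) (J : ℕ)).submatrix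
      ⇑finSumFinEquiv ⇑finSumFinEquiv =
      Matrix.fromBlocks (Matrix.of fun I J : Fin m => h ((l I : ℤ) - (I : ℕ) + (J : ℕ)) (J : ℕ))
        (Matrix.of fun (I : Fin m) (_ : Fin 1) => h ((l I : ℤ) - (I : ℕ) + m) m) 0
        (Matrix.of fun (_ _ : Fin 1) => h 0 m) := by
    ext x y
    cases x with
    | inl I =>
      cases y with
      | inl J => rfl
      | inr J =>
        have hJ : (J : ℕ) = 0 := by omega
        rw [Matrix.submatrix_apply, Matrix.fromBlocks_apply₁₂]
        show h ((l (I : ℕ) : ℤ) - (I : ℕ) + ((m + (J : ℕ) : ℕ) : ℕ)) (m + (J : ℕ))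
          = h ((l I : ℤ) - (I : ℕ) + m) m
        rw [hJ, Nat.add_zero]
    | inr I =>
      have hI : (I : ℕ) = 0 := by omega
      cases y with
      | inl J =>
        rw [Matrix.submatrix_apply, Matrix.fromBlocks_apply₂₁]
        show h ((l (m + (I : ℕ)) : ℤ) - ((m + (I : ℕ) : ℕ) : ℕ) + (J : ℕ)) (J : ℕ) = (0 : Matrix (Fin 1) (Fin m) R) I J
        rw [hI, Nat.add_zero, hm]
        rw [Matrix.zero_apply]
        apply hneg
        have := J.isLt
        push_cast
        omega
      | inr J =>
        have hJ : (J : ℕ) = 0 := by omega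
        rw [Matrix.submatrix_apply, Matrix.fromBlocks_apply₂₂]
        show h ((l (m + (I : ℕ)) : ℤ) - ((m + (I : ℕ) : ℕ) : ℕ) + ((m + (J : ℕ) : ℕ) : ℕ)) (m + (J : ℕ))
          = h 0 m
        rw [hI, hJ, Nat.add_zero, hm]
        congr 1
        push_cast
        ring
  rw [hsub, Matrix.det_fromBlocks_zero₂₁, Matrix.det_fin_one, Matrix.of_apply, h0, mul_one]

lemma stilde_stable (h : ℤ → ℕ → R) (h0 : ∀ s, h 0 s = 1)
    (hneg : ∀ r : ℤ, r < 0 → ∀ s, h r s = 0) (l : ℕ → ℕ) (k0 k1 : ℕ) (hk : k0 ≤ k1)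
    (hz : ∀ i, k0 ≤ i → l i = 0) : stilde h l k1 = stilde h l k0 := by
  induction k1, hk using Nat.le_induction with
  | base => rfl
  | succ n hn ih => rw [stilde_succ h h0 hneg l n (hz n hn), ih]

lemma stilde_hook (h : ℤ → ℕ → R) (h0 : ∀ s, h 0 s = 1)
    (hneg : ∀ r : ℤ, r < 0 → ∀ s, h r s = 0) (p q k : ℕ) (hqk : q < k) :
    stilde h (hookP p q) k =
      (-1 : R) ^ q *
        ((Matrix.of fun I J : Fin k => h ((J : ℤ) - (I : ℕ)) J).updateRow ⟨q, hqk⟩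
          (fun J : Fin k => h ((p : ℤ) + 1 + (J : ℕ)) J)).det := by
  obtain ⟨m, rfl⟩ : ∃ m, k = m + 1 := ⟨k - 1, by omega⟩
  set hookl : ℕ → ℕ := hookP p q with hhookl
  set T : Matrix (Fin (m + 1)) (Fin (m + 1)) R :=
    Matrix.of fun I J : Fin (m + 1) => h ((J : ℤ) - (I : ℕ)) J with hT
  set qF : Fin (m + 1) := ⟨q, hqk⟩ with hqF
  set v : Fin (m + 1) → R := fun J => h ((p : ℤ) + 1 + (J : ℕ)) J with hv
  set HM : Matrix (Fin (m + 1)) (Fin (m + 1)) R :=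
    Matrix.of fun I J : Fin (m + 1) => h ((hookl I : ℤ) - (I : ℕ) + (J : ℕ)) J with hHM
  have key : HM.submatrix ⇑(Fin.cycleRange qF) id = T.updateRow qF v := by
    ext I J
    rw [Matrix.submatrix_apply, id_eq]
    rcases lt_trichotomy I qF with hI | hI | hI
    · rw [Fin.cycleRange_of_lt hI, Matrix.updateRow_ne (ne_of_lt hI)]
      have hval : ((I + 1 : Fin (m + 1)) : ℕ) = (I : ℕ) + 1 :=
        Fin.val_add_one_of_lt (lt_of_lt_of_le hI (Fin.le_last qF))
      show h ((hookl ((I + 1 : Fin (m + 1)) : ℕ) : ℤ) - (((I + 1 : Fin (m + 1)) : ℕ) : ℕ) + (J : ℕ)) (J : ℕ)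
        = h ((J : ℤ) - (I : ℕ)) (J : ℕ)
      rw [hval]
      have hIq : (I : ℕ) < q := hI
      have hone : hookl ((I : ℕ) + 1) = 1 := by
        simp only [hhookl, hookP]
        rw [if_neg (by omega), if_pos (by omega)]
      rw [hone]
      congr 1
      push_cast
      ring
    · rw [hI, Fin.cycleRange_self, Matrix.updateRow_self]
      show h ((hookl ((0 : Fin (m + 1)) : ℕ) : ℤ) - (((0 : Fin (m + 1)) : ℕ) : ℕ) + (J : ℕ)) (J : ℕ)
        = h ((p : ℤ) + 1 + (J : ℕ)) (J : ℕ)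
      have h0' : hookl ((0 : Fin (m + 1)) : ℕ) = p + 1 := by
        simp [hhookl, hookP]
      rw [h0', Fin.val_zero]
      congr 1 <;> (push_cast; ring)
    · rw [Fin.cycleRange_of_gt hI, Matrix.updateRow_ne (ne_of_gt hI)]
      have hIq : q < (I : ℕ) := hI
      have hzero : hookl (I : ℕ) = 0 := by
        simp only [hhookl, hookP]
        rw [if_neg (by omega), if_neg (by omega)]
      show h ((hookl (I : ℕ) : ℤ) - (I : ℕ) + (J : ℕ)) (J : ℕ) = h ((J : ℤ) - (I : ℕ)) (J : ℕ)
      rw [hzero]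
      congr 1
      push_cast
      ring
  have hdet := Matrix.det_permute (Fin.cycleRange qF) HM
  rw [key, Fin.sign_cycleRange] at hdet
  simp only [Units.val_pow_eq_pow_val, Units.val_neg, Units.val_one, Int.cast_pow,
    Int.cast_neg, Int.cast_one] at hdet
  have hq2 : (-1 : R) ^ q * (-1 : R) ^ ((qF : ℕ)) = 1 := by
    rw [show ((qF : ℕ)) = q from rfl, ← mul_pow]
    norm_num
  show HM.det = (-1 : R) ^ q * (T.updateRow qF v).det
  rw [hdet, ← mul_assoc, hq2, one_mul]


end MG

/-- Macdonald's Giambelli lemma. Let `h_{r,s}` be elements of a commutative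
ring with `h_{0,s} = 1` and `h_{r,s} = 0` for `r < 0`, let `λ` be a partition of length at
most `L`, with Frobenius coordinates `λ = (p_1,...,p_d | q_1,...,q_d)`, and set
`s̃_μ = det[h_{μ_i − i + j, j−1}]_{i,j=1}^k` for any `k ≥ ℓ(μ)`. Then
`s̃_λ = det[s̃_{(p_i | q_j)}]_{i,j=1}^d`, where `(p|q)` is the hook partition with arm `p`
and leg `q` (whose length is `q + 1`). -/
theorem macdonald_giambelli {R : Type*} [CommRing R] (h : ℤ → ℕ → R)
    (h0 : ∀ s, h 0 s = 1) (hneg : ∀ r : ℤ, r < 0 → ∀ s, h r s = 0)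
    (l : ℕ → ℕ) (hl : Antitone l) (L : ℕ) (hsupp : ∀ i, L ≤ i → l i = 0)
    (k : ℕ) (hk : L ≤ k) :
    stilde h l k =
      Matrix.det (Matrix.of fun i j : Fin (frobRank l L) =>
        stilde h (hookP (frobArm l i) (frobLeg l L j)) (frobLeg l L j + 1)) := by
  classical
  set d := frobRank l L with hd_def
  set q : ℕ → ℕ := frobLeg l L with hq_def
  -- diagonal characterization
  have hdiag : ∀ I : ℕ, I < l I ↔ I < d := by
    have hdc : ∀ x ∈ (Finset.range L).filter (fun i => i < l i), ∀ y, y < x →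
        y ∈ (Finset.range L).filter (fun i => i < l i) := by
      intro x hx y hyx
      rw [Finset.mem_filter, Finset.mem_range] at hx ⊢
      have := hl (le_of_lt hyx)
      exact ⟨by omega, by omega⟩
    intro I
    constructor
    · intro hI
      have hIL : I < L := by
        by_contra hc
        rw [hsupp I (by omega)] at hI
        omega
      have hmem : I ∈ (Finset.range L).filter (fun i => i < l i) := by
        rw [Finset.mem_filter, Finset.mem_range]; exact ⟨hIL, hI⟩
      rw [MG.mem_iff_lt_card hdc] at hmem
      exact hmem
    · intro hI
      have hmem : I ∈ (Finset.range L).filter (fun i => i < l i) := by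
        rw [MG.mem_iff_lt_card hdc]; exact hI
      rw [Finset.mem_filter] at hmem
      exact hmem.2
  have hdL : d ≤ L := by
    calc d ≤ (Finset.range L).card := Finset.card_filter_le _ _
    _ = L := Finset.card_range L
  have hdk : d ≤ k := le_trans hdL hk
  have hlle : ∀ I : ℕ, d ≤ I → l I ≤ I := by
    intro I hI
    by_contra hc
    have := (hdiag I).mp (by omega)
    omega
  have hcj : ∀ j x : ℕ, j + 1 ≤ l x ↔ x < ((Finset.range L).filter (fun m => j + 1 ≤ l m)).card := by
    intro j
    have hdc : ∀ a ∈ (Finset.range L).filter (fun m => j + 1 ≤ l m), ∀ y, y < a →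
        y ∈ (Finset.range L).filter (fun m => j + 1 ≤ l m) := by
      intro a ha y hya
      rw [Finset.mem_filter, Finset.mem_range] at ha ⊢
      have := hl (le_of_lt hya)
      exact ⟨by omega, by omega⟩
    intro x
    constructor
    · intro hx
      have hxL : x < L := by
        by_contra hc
        rw [hsupp x (by omega)] at hx
        omega
      have hmem : x ∈ (Finset.range L).filter (fun m => j + 1 ≤ l m) :=
        Finset.mem_filter.mpr ⟨Finset.mem_range.mpr hxL, hx⟩
      rwa [MG.mem_iff_lt_card hdc] at hmem
    · intro hx
      have hmem := (MG.mem_iff_lt_card hdc x).mpr hx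
      exact (Finset.mem_filter.mp hmem).2
  have hqdef : ∀ j : ℕ, q j = ((Finset.range L).filter (fun m => j + 1 ≤ l m)).card - (j + 1) :=
    fun j => rfl
  have hqc : ∀ j : ℕ, j < d → j + 1 ≤ ((Finset.range L).filter (fun m => j + 1 ≤ l m)).card := by
    intro j hj
    have h1 : j + 1 ≤ l j := (hdiag j).mpr hj
    have h2 := (hcj j j).mp h1
    omega
  have hcmono : ∀ i j : ℕ, i ≤ j →
      ((Finset.range L).filter (fun m => j + 1 ≤ l m)).card
        ≤ ((Finset.range L).filter (fun m => i + 1 ≤ l m)).card := by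
    intro i j hij
    apply Finset.card_le_card
    intro a ha
    rw [Finset.mem_filter] at ha ⊢
    exact ⟨ha.1, by omega⟩
  have hqanti : ∀ i j : ℕ, i < j → j < d → q j < q i := by
    intro i j hij hjd
    have h1 := hqc i (by omega)
    have h2 := hqc j hjd
    have h3 := hcmono i j (by omega)
    rw [hqdef i, hqdef j]
    omega
  have hqk : ∀ j : ℕ, j < d → q j < k := by
    intro j hj
    have h1 := hqc j hj
    have h2 : ((Finset.range L).filter (fun m => j + 1 ≤ l m)).card ≤ L := by
      calc _ ≤ (Finset.range L).card := Finset.card_filter_le _ _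
      _ = L := Finset.card_range L
    rw [hqdef j]
    omega
  have hqa : ∀ j : ℕ, j < d → ∀ I : ℕ, l I ≤ I → I - l I ≠ q j := by
    intro j hj I hI heq
    rw [hqdef j] at heq
    rcases le_or_gt ((Finset.range L).filter (fun m => j + 1 ≤ l m)).card I with hca | hca
    · have h1 : ¬ (j + 1 ≤ l I) := by rw [hcj j I]; omega
      have h2 := hqc j hj
      omega
    · have h1 : j + 1 ≤ l I := (hcj j I).mpr hca
      have h2 := hqc j hj
      omega
  -- matrices
  set T : Matrix (Fin k) (Fin k) R := Matrix.of (fun I J : Fin k => h ((J : ℤ) - (I : ℕ)) J)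
    with hT_def
  have hTdet : T.det = 1 := by
    have htri : T.BlockTriangular id := by
      intro i j hji
      show h ((j : ℤ) - (i : ℕ)) j = 0
      apply hneg
      have : (j : ℕ) < (i : ℕ) := hji
      omega
    rw [Matrix.det_of_upperTriangular htri]
    apply Finset.prod_eq_one
    intro i _
    show h ((i : ℤ) - (i : ℕ)) i = 1
    rw [sub_self, h0]
  set JT : Matrix (Fin k) (Fin k) R :=
    Matrix.of (fun I J : Fin k => h ((l I : ℤ) - (I : ℕ) + (J : ℕ)) J) with hJT_def
  set N : Matrix (Fin k) (Fin k) R := JT * T.adjugate with hN_def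
  have hNdet : N.det = JT.det := by
    rw [hN_def, Matrix.det_mul, Matrix.det_adjugate, hTdet, one_pow, mul_one]
  set aF : Fin k → Fin k :=
    fun I => ⟨(I : ℕ) - l I, lt_of_le_of_lt (Nat.sub_le _ _) I.isLt⟩ with haF_def
  have haFval : ∀ I : Fin k, (aF I : ℕ) = (I : ℕ) - l I := fun I => rfl
  have hrowlow : ∀ I : Fin k, (I : ℕ) < d → ∀ J : Fin k,
      N I J = (T.updateRow J (fun s : Fin k => h ((l I : ℤ) - (I : ℕ) + (s : ℕ)) s)).det := by
    intro I _ J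
    rw [hN_def, Matrix.mul_apply]
    exact MG.sum_mul_adjugate T _ J
  have hrowhigh : ∀ I : Fin k, d ≤ (I : ℕ) → ∀ J : Fin k,
      N I J = (1 : Matrix (Fin k) (Fin k) R) (aF I) J := by
    intro I hI J
    have hlI : l (I : ℕ) ≤ (I : ℕ) := hlle _ hI
    have hJTrow : ∀ s : Fin k, JT I s = T (aF I) s := by
      intro s
      show h ((l I : ℤ) - (I : ℕ) + (s : ℕ)) s = h ((s : ℤ) - ((aF I : ℕ) : ℕ)) s
      rw [haFval]
      congr 1
      push_cast [hlI]
      ring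
    calc N I J = ∑ s, T (aF I) s * T.adjugate s J := by
          rw [hN_def, Matrix.mul_apply]
          exact Finset.sum_congr rfl (fun s _ => by rw [hJTrow s])
    _ = (T * T.adjugate) (aF I) J := (Matrix.mul_apply).symm
    _ = (T.det • (1 : Matrix (Fin k) (Fin k) R)) (aF I) J := by rw [Matrix.mul_adjugate]
    _ = (1 : Matrix (Fin k) (Fin k) R) (aF I) J := by rw [hTdet, one_smul]
  -- the two parametrizations
  set f_row : Fin d ⊕ Fin (k - d) → Fin k :=
    Sum.elim (fun j => ⟨(j : ℕ), lt_of_lt_of_le j.isLt hdk⟩)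
      (fun t => ⟨d + (t : ℕ), by omega⟩) with hf_row
  have hf_row_inj : Function.Injective f_row := by
    intro x y hxy
    cases x with
    | inl i =>
      cases y with
      | inl i' =>
        have hv : (f_row (Sum.inl i) : ℕ) = (f_row (Sum.inl i') : ℕ) := congrArg Fin.val hxy
        have hv' : (i : ℕ) = (i' : ℕ) := hv
        exact congrArg Sum.inl (Fin.ext hv')
      | inr t' =>
        have hv : (f_row (Sum.inl i) : ℕ) = (f_row (Sum.inr t') : ℕ) := congrArg Fin.val hxy
        have hv' : (i : ℕ) = d + (t' : ℕ) := hv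
        have := i.isLt
        omega
    | inr t =>
      cases y with
      | inl i' =>
        have hv : (f_row (Sum.inr t) : ℕ) = (f_row (Sum.inl i') : ℕ) := congrArg Fin.val hxy
        have hv' : d + (t : ℕ) = (i' : ℕ) := hv
        have := i'.isLt
        omega
      | inr t' =>
        have hv : (f_row (Sum.inr t) : ℕ) = (f_row (Sum.inr t') : ℕ) := congrArg Fin.val hxy
        have hv' : d + (t : ℕ) = d + (t' : ℕ) := hv
        exact congrArg Sum.inr (Fin.ext (by omega))
  set e_row : (Fin d ⊕ Fin (k - d)) ≃ Fin k :=
    Equiv.ofBijective f_row ((Fintype.bijective_iff_injective_and_card f_row).mpr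
      ⟨hf_row_inj, by simp [Fintype.card_sum]; omega⟩) with he_row
  set f_col : Fin d ⊕ Fin (k - d) → Fin k :=
    Sum.elim (fun j => ⟨q (j : ℕ), hqk _ j.isLt⟩)
      (fun t => aF ⟨d + (t : ℕ), by omega⟩) with hf_col
  have hf_col_inj : Function.Injective f_col := by
    intro x y hxy
    cases x with
    | inl i =>
      cases y with
      | inl i' =>
        have hv0 : (f_col (Sum.inl i) : ℕ) = (f_col (Sum.inl i') : ℕ) := congrArg Fin.val hxy
        have hv : q (i : ℕ) = q (i' : ℕ) := hv0
        rcases lt_trichotomy ((i : ℕ)) ((i' : ℕ)) with hc | hc | hc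
        · have := hqanti _ _ hc i'.isLt; omega
        · exact congrArg Sum.inl (Fin.ext hc)
        · have := hqanti _ _ hc i.isLt; omega
      | inr t' =>
        have hv0 : (f_col (Sum.inl i) : ℕ) = (f_col (Sum.inr t') : ℕ) := congrArg Fin.val hxy
        have hv : q (i : ℕ) = (d + (t' : ℕ)) - l (d + (t' : ℕ)) := hv0
        exact absurd hv.symm (hqa _ i.isLt _ (hlle _ (by omega)))
    | inr t =>
      cases y with
      | inl i' =>
        have hv0 : (f_col (Sum.inr t) : ℕ) = (f_col (Sum.inl i') : ℕ) := congrArg Fin.val hxy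
        have hv : (d + (t : ℕ)) - l (d + (t : ℕ)) = q (i' : ℕ) := hv0
        exact absurd hv (hqa _ i'.isLt _ (hlle _ (by omega)))
      | inr t' =>
        have hv0 : (f_col (Sum.inr t) : ℕ) = (f_col (Sum.inr t') : ℕ) := congrArg Fin.val hxy
        have hv : (d + (t : ℕ)) - l (d + (t : ℕ)) = (d + (t' : ℕ)) - l (d + (t' : ℕ)) := hv0
        rcases lt_trichotomy ((t : ℕ)) ((t' : ℕ)) with hc | hc | hc
        · have h1 := hl (show d + (t : ℕ) ≤ d + (t' : ℕ) by omega)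
          have h2 := hlle (d + (t : ℕ)) (by omega)
          omega
        · exact congrArg Sum.inr (Fin.ext hc)
        · have h1 := hl (show d + (t' : ℕ) ≤ d + (t : ℕ) by omega)
          have h2 := hlle (d + (t' : ℕ)) (by omega)
          omega
  set e_col : (Fin d ⊕ Fin (k - d)) ≃ Fin k :=
    Equiv.ofBijective f_col ((Fintype.bijective_iff_injective_and_card f_col).mpr
      ⟨hf_col_inj, by simp [Fintype.card_sum]; omega⟩) with he_col
  set ρ : Equiv.Perm (Fin k) := e_row.symm.trans e_col with hρ_def
  have hρ_low : ∀ x : Fin k, (x : ℕ) < d → (ρ x : ℕ) = q (x : ℕ) := by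
    intro x hx
    have h1 : e_row.symm x = Sum.inl ⟨(x : ℕ), hx⟩ := by
      rw [Equiv.symm_apply_eq]
      exact Fin.ext rfl
    show (e_col (e_row.symm x) : ℕ) = q (x : ℕ)
    rw [h1]
    rfl
  have hρ_high : ∀ x : Fin k, d ≤ (x : ℕ) → (ρ x : ℕ) = (x : ℕ) - l (x : ℕ) := by
    intro x hx
    have h1 : e_row.symm x = Sum.inr ⟨(x : ℕ) - d, by omega⟩ := by
      rw [Equiv.symm_apply_eq]
      apply Fin.ext
      have hv : (e_row (Sum.inr (⟨(x : ℕ) - d, by omega⟩ : Fin (k - d))) : ℕ)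
          = d + ((x : ℕ) - d) := rfl
      rw [hv]
      omega
    show (e_col (e_row.symm x) : ℕ) = (x : ℕ) - l (x : ℕ)
    rw [h1]
    show (d + ((x : ℕ) - d)) - l (d + ((x : ℕ) - d)) = (x : ℕ) - l (x : ℕ)
    have hxd : d + ((x : ℕ) - d) = (x : ℕ) := by omega
    rw [hxd]
  have hsignρ : Equiv.Perm.sign ρ = (-1) ^ (∑ i : Fin d, q (i : ℕ)) := by
    have hhead : ∀ i j : Fin k, i < j → (j : ℕ) < d → ρ j < ρ i := by
      intro i j hij hjd
      have hid : (i : ℕ) < d := lt_of_lt_of_le (Fin.lt_def.mp hij) (by omega)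
      rw [Fin.lt_def, hρ_low i hid, hρ_low j hjd]
      exact hqanti _ _ (Fin.lt_def.mp hij) hjd
    have htail : ∀ i j : Fin k, d ≤ (i : ℕ) → i < j → ρ i < ρ j := by
      intro i j hi hij
      have hij' := Fin.lt_def.mp hij
      rw [Fin.lt_def, hρ_high i hi, hρ_high j (by omega)]
      have h1 := hl (le_of_lt hij')
      have h2 := hlle (i : ℕ) hi
      omega
    rw [MG.sign_formula d k hdk ρ hhead htail]
    congr 1
    apply Finset.sum_congr rfl
    intro i _
    rw [hρ_low (Fin.castLE hdk i) (by show (i : ℕ) < d; exact i.isLt)]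
    rfl
  -- block decomposition
  set W : Matrix (Fin d) (Fin d) R := Matrix.of fun (i jj : Fin d) =>
    (T.updateRow (e_col (Sum.inl jj))
      (fun s : Fin k => h ((l (i : ℕ) : ℤ) - (i : ℕ) + (s : ℕ)) s)).det with hW_def
  set B : Matrix (Fin d) (Fin (k - d)) R := Matrix.of fun (i : Fin d) (t : Fin (k - d)) =>
    N (e_row (Sum.inl i)) (e_col (Sum.inr t)) with hB_def
  have hblocks : N.submatrix ⇑e_row ⇑e_col = Matrix.fromBlocks W B 0 1 := by
    ext x y
    cases x with
    | inl i =>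
      cases y with
      | inl jj =>
        rw [Matrix.submatrix_apply, Matrix.fromBlocks_apply₁₁,
          hrowlow (e_row (Sum.inl i)) (by show (i : ℕ) < d; exact i.isLt) (e_col (Sum.inl jj))]
        rfl
      | inr t =>
        rw [Matrix.submatrix_apply, Matrix.fromBlocks_apply₁₂]
        rfl
    | inr t =>
      have hded : d ≤ ((e_row (Sum.inr t)) : ℕ) := by show d ≤ d + (t : ℕ); omega
      cases y with
      | inl jj =>
        rw [Matrix.submatrix_apply, Matrix.fromBlocks_apply₂₁,
          hrowhigh _ hded, Matrix.zero_apply]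
        apply Matrix.one_apply_ne
        apply Fin.ne_of_val_ne
        rw [haFval]
        show ((e_row (Sum.inr t) : ℕ)) - l _ ≠ q (jj : ℕ)
        exact hqa _ jj.isLt _ (hlle _ hded)
      | inr t' =>
        rw [Matrix.submatrix_apply, Matrix.fromBlocks_apply₂₂, hrowhigh _ hded]
        by_cases htt : t = t'
        · subst htt
          have heq : aF (e_row (Sum.inr t)) = e_col (Sum.inr t) := rfl
          rw [heq, Matrix.one_apply_eq, Matrix.one_apply_eq]
        · have hne : aF (e_row (Sum.inr t)) ≠ e_col (Sum.inr t') := by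
            apply Fin.ne_of_val_ne
            rw [haFval]
            show ((e_row (Sum.inr t) : ℕ)) - l _ ≠ (d + (t' : ℕ)) - l (d + (t' : ℕ))
            show (d + (t : ℕ)) - l (d + (t : ℕ)) ≠ (d + (t' : ℕ)) - l (d + (t' : ℕ))
            have htt' : (t : ℕ) ≠ (t' : ℕ) := fun hc => htt (Fin.ext hc)
            rcases lt_or_gt_of_ne htt' with hc | hc
            · have h1 := hl (show d + (t : ℕ) ≤ d + (t' : ℕ) by omega)
              have h2 := hlle (d + (t : ℕ)) (by omega)
              omega
            · have h1 := hl (show d + (t' : ℕ) ≤ d + (t : ℕ) by omega)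
              have h2 := hlle (d + (t' : ℕ)) (by omega)
              omega
          rw [Matrix.one_apply_ne hne, Matrix.one_apply_ne htt]
  have hWdet : (N.submatrix ⇑e_row ⇑e_col).det = W.det := by
    rw [hblocks, Matrix.det_fromBlocks_zero₂₁, Matrix.det_one, mul_one]
  set π : Equiv.Perm (Fin d ⊕ Fin (k - d)) := e_row.trans e_col.symm with hπ_def
  have hsub2 : N.submatrix ⇑e_row ⇑e_col = (N.submatrix ⇑e_col ⇑e_col).submatrix ⇑π id := by
    ext x y
    rw [Matrix.submatrix_apply, Matrix.submatrix_apply, Matrix.submatrix_apply, id_eq]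
    exact congrArg (fun z => N z (e_col y)) (Equiv.apply_symm_apply e_col (e_row x)).symm
  have hdet2 : (N.submatrix ⇑e_row ⇑e_col).det = Equiv.Perm.sign π * N.det := by
    rw [hsub2, Matrix.det_permute, Matrix.det_submatrix_equiv_self]
  have hsignπ : Equiv.Perm.sign π = Equiv.Perm.sign ρ := by
    have hππ : Equiv.permCongr e_row π = ρ⁻¹ := by
      apply Equiv.ext
      intro z
      rw [Equiv.permCongr_apply]
      show e_row (e_col.symm (e_row (e_row.symm z))) = ρ⁻¹ z
      rw [Equiv.apply_symm_apply]
      rfl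
    rw [← Equiv.Perm.sign_permCongr e_row π, hππ, Equiv.Perm.sign_inv]
  have hmain : JT.det = (-1 : R) ^ (∑ i : Fin d, q (i : ℕ)) * W.det := by
    have h2 := hdet2
    rw [hsignπ, hsignρ, hNdet, hWdet] at h2
    simp only [Units.val_pow_eq_pow_val, Units.val_neg, Units.val_one, Int.cast_pow,
      Int.cast_neg, Int.cast_one] at h2
    rw [h2, ← mul_assoc,
      (by rw [← mul_pow]; norm_num :
        (-1 : R) ^ (∑ i : Fin d, q (i : ℕ)) * (-1 : R) ^ (∑ i : Fin d, q (i : ℕ)) = 1),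
      one_mul]
  -- the right-hand side
  have hentry : ∀ i j : Fin d, stilde h (hookP (frobArm l (i : ℕ)) (q (j : ℕ))) (q (j : ℕ) + 1)
      = (-1 : R) ^ (q (j : ℕ)) * W i j := by
    intro i j
    have hz : ∀ x, q (j : ℕ) + 1 ≤ x → hookP (frobArm l (i : ℕ)) (q (j : ℕ)) x = 0 := by
      intro x hx
      simp only [hookP]
      rw [if_neg (by omega), if_neg (by omega)]
    rw [← MG.stilde_stable h h0 hneg _ (q (j : ℕ) + 1) k (hqk _ j.isLt) hz,
      MG.stilde_hook h h0 hneg (frobArm l (i : ℕ)) (q (j : ℕ)) k (hqk _ j.isLt)]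
    congr 1
    have hc1 : (⟨q (j : ℕ), hqk _ j.isLt⟩ : Fin k) = e_col (Sum.inl j) := rfl
    have hrows : (fun J : Fin k => h ((frobArm l (i : ℕ) : ℤ) + 1 + (J : ℕ)) J)
        = (fun s : Fin k => h ((l (i : ℕ) : ℤ) - (i : ℕ) + (s : ℕ)) s) := by
      funext s
      congr 1
      have hge : (i : ℕ) + 1 ≤ l (i : ℕ) := (hdiag (i : ℕ)).mpr i.isLt
      show ((l (i : ℕ) - ((i : ℕ) + 1) : ℕ) : ℤ) + 1 + (s : ℕ)
        = (l (i : ℕ) : ℤ) - (i : ℕ) + (s : ℕ)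
      rw [Nat.cast_sub hge]
      push_cast
      ring
    rw [← hT_def, hrows, hc1]
    rfl
  have hRHS : (Matrix.of fun i j : Fin d =>
        stilde h (hookP (frobArm l (i : ℕ)) (q (j : ℕ))) (q (j : ℕ) + 1)).det
      = (-1 : R) ^ (∑ i : Fin d, q (i : ℕ)) * W.det := by
    have hmat : (Matrix.of fun i j : Fin d =>
        stilde h (hookP (frobArm l (i : ℕ)) (q (j : ℕ))) (q (j : ℕ) + 1))
        = Matrix.of fun i j : Fin d => ((fun jj : Fin d => (-1 : R) ^ (q (jj : ℕ))) j) * W i j := by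
      ext i j
      exact hentry i j
    rw [hmat, Matrix.det_mul_row, Finset.prod_pow_eq_pow_sum]
  calc stilde h l k = JT.det := rfl
  _ = (-1 : R) ^ (∑ i : Fin d, q (i : ℕ)) * W.det := hmain
  _ = _ := hRHS.symm
end

section
/- For a polynomial ensemble with density (1/Z_N)Δ_N(x)·det[φ_l(x_k)], the expectation of the Schur polynomial s_λ(x_1,...,x_N) equals det[∫_I x^{λ_i+N−i} φ_j(x) dx]_{i,j=1}^N / det[∫_I x^{N−i} φ_j(x) dx]_{i,j=1}^N. -/
open MeasureTheory Equiv

/-! Andréief's identity `∫ det[f_j(x_k)] det[g_j(x_k)] dμ^N(x) = N! det[∫ f_i g_j dμ]`, applied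
with `f_i(t) = t^{λ_i+N-1-i}` and with `f_i(t) = t^{N-1-i}`, expresses numerator and denominator
as `N!` times the moment determinants; the factors `N!` cancel. -/

namespace Matrix

variable {ι R : Type*} [Fintype ι] [DecidableEq ι] [CommRing R]

theorem det_mul_det_eq_sum_sum_perm (A B : Matrix ι ι R) :
    A.det * B.det = ∑ σ : Perm ι, ∑ τ : Perm ι,
      ((Perm.sign σ : R) * Perm.sign τ) * ∏ k, A k (σ k) * B k (τ k) := by
  rw [← det_transpose A, ← det_transpose B, det_apply', det_apply', Finset.sum_mul_sum]
  refine Finset.sum_congr rfl fun σ _ => Finset.sum_congr rfl fun τ _ => ?_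
  rw [Finset.prod_mul_distrib]
  simp only [transpose_apply]
  ring

theorem sum_perm_sign_mul_prod_eq_det (M : Matrix ι ι R) (σ : Perm ι) :
    ∑ τ : Perm ι, ((Perm.sign σ : R) * Perm.sign τ) * ∏ k, M (σ k) (τ k) = M.det := by
  have hrows : ∑ τ : Perm ι, (Perm.sign τ : R) * ∏ k, M (σ k) (τ k) =
      Perm.sign σ * M.det := by
    rw [← det_permute, ← det_transpose, det_apply']
    rfl
  simp_rw [mul_assoc, ← Finset.mul_sum, hrows, ← mul_assoc, ← Int.cast_mul, ← Units.val_mul,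
    Int.units_mul_self, Units.val_one, Int.cast_one, one_mul]

end Matrix

section Andreief

variable {ι α 𝕜 : Type*} [Fintype ι] [DecidableEq ι] [MeasurableSpace α] [RCLike 𝕜]

theorem integral_det_mul_det_eq_factorial_mul_det (μ : Measure α) [SigmaFinite μ]
    (f g : ι → α → 𝕜) (hfg : ∀ i j, Integrable (fun t => f i t * g j t) μ) :
    ∫ x : ι → α, (Matrix.of fun k j => f j (x k)).det * (Matrix.of fun k j => g j (x k)).det
        ∂(Measure.pi fun _ => μ) =
      (Fintype.card ι).factorial * (Matrix.of fun i j => ∫ t, f i t * g j t ∂μ).det := by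
  have hterm : ∀ σ τ : Perm ι, Integrable (fun x : ι → α => ∏ k, f (σ k) (x k) * g (τ k) (x k))
      (Measure.pi fun _ => μ) := fun σ τ =>
    Integrable.fintype_prod (f := fun k t => f (σ k) t * g (τ k) t) fun _ => hfg _ _
  have hinner : ∀ σ τ : Perm ι, ∫ x : ι → α, ∏ k, f (σ k) (x k) * g (τ k) (x k)
      ∂(Measure.pi fun _ => μ) = ∏ k, Matrix.of (fun i j => ∫ t, f i t * g j t ∂μ) (σ k) (τ k) :=
    fun σ τ => integral_fintype_prod_eq_prod fun k t => f (σ k) t * g (τ k) t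
  simp_rw [Matrix.det_mul_det_eq_sum_sum_perm, Matrix.of_apply]
  rw [integral_finsetSum _ fun σ _ => integrable_finsetSum _ fun τ _ => (hterm σ τ).const_mul _]
  simp_rw [integral_finsetSum _ fun τ _ => (hterm _ τ).const_mul _, integral_const_mul, hinner,
    Matrix.sum_perm_sign_mul_prod_eq_det, Finset.sum_const, Finset.card_univ, Fintype.card_perm,
    nsmul_eq_mul]

end Andreief

theorem polynomial_ensemble_schur_expectation_general (N : ℕ) (I : Set ℝ)
    (φ : Fin N → ℝ → ℝ)
    (l : Fin N → ℕ)
    (hmom : ∀ (m : ℕ) (j : Fin N), IntegrableOn (fun t => t ^ m * φ j t) I) :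
    (∫ x : Fin N → ℝ,
        Matrix.det (Matrix.of fun i j : Fin N => x i ^ (l j + (N - 1 - (j : ℕ)))) *
          Matrix.det (Matrix.of fun k j : Fin N => φ j (x k))
        ∂(Measure.pi fun _ => volume.restrict I)) /
      (∫ x : Fin N → ℝ,
        Matrix.det (Matrix.of fun i j : Fin N => x i ^ (N - 1 - (j : ℕ))) *
          Matrix.det (Matrix.of fun k j : Fin N => φ j (x k))
        ∂(Measure.pi fun _ => volume.restrict I))
      = Matrix.det (Matrix.of fun i j : Fin N =>
            ∫ t in I, t ^ (l i + (N - 1 - (i : ℕ))) * φ j t) /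
          Matrix.det (Matrix.of fun i j : Fin N =>
            ∫ t in I, t ^ (N - 1 - (i : ℕ)) * φ j t) := by
  rw [integral_det_mul_det_eq_factorial_mul_det _ (fun (i : Fin N) t => t ^ (l i + (N - 1 - (i : ℕ)))) φ
      fun _ _ => hmom _ _,
    integral_det_mul_det_eq_factorial_mul_det _ (fun (i : Fin N) t => t ^ (N - 1 - (i : ℕ))) φ
      fun _ _ => hmom _ _,
    Fintype.card_fin, mul_div_mul_left _ _ (Nat.cast_ne_zero.mpr N.factorial_ne_zero)]

/-- expectation of a Schur polynomial in a polynomial ensemble. For the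
polynomial ensemble `(1/Z_N) Δ_N(x) det[φ_l(x_k)]` on `I^N` and a partition
`λ_1 ≥ ... ≥ λ_N ≥ 0`, using `s_λ(x) Δ_N(x) = det[x_i^{λ_j + N - j}]` we have
`𝔼[s_λ] = det[∫_I x^{λ_i+N−i} φ_j(x) dx] / det[∫_I x^{N−i} φ_j(x) dx]`
(equivalently, the ratio of the two ensemble integrals on the left equals the ratio of
moment determinants on the right; indices are zero-based so `N - i` becomes `N - 1 - i`). -/
theorem polynomial_ensemble_schur_expectation (N : ℕ) (I : Set ℝ) (hI : MeasurableSet I)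
    (φ : Fin N → ℝ → ℝ) (hφ : ∀ j, Measurable (φ j))
    (l : Fin N → ℕ) (hl : ∀ i j : Fin N, i ≤ j → l j ≤ l i)
    (hmom : ∀ (m : ℕ) (j : Fin N), IntegrableOn (fun t => t ^ m * φ j t) I)
    (hint1 : Integrable
      (fun x : Fin N → ℝ =>
        Matrix.det (Matrix.of fun i j : Fin N => x i ^ (l j + (N - 1 - (j : ℕ)))) *
          Matrix.det (Matrix.of fun k j : Fin N => φ j (x k)))
      (Measure.pi fun _ => volume.restrict I))
    (hint2 : Integrable
      (fun x : Fin N → ℝ =>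
        Matrix.det (Matrix.of fun i j : Fin N => x i ^ (N - 1 - (j : ℕ))) *
          Matrix.det (Matrix.of fun k j : Fin N => φ j (x k)))
      (Measure.pi fun _ => volume.restrict I))
    (hZ : Matrix.det (Matrix.of fun i j : Fin N => ∫ t in I, t ^ (N - 1 - (i : ℕ)) * φ j t) ≠ 0) :
    (∫ x : Fin N → ℝ,
        Matrix.det (Matrix.of fun i j : Fin N => x i ^ (l j + (N - 1 - (j : ℕ)))) *
          Matrix.det (Matrix.of fun k j : Fin N => φ j (x k))
        ∂(Measure.pi fun _ => volume.restrict I)) /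
      (∫ x : Fin N → ℝ,
        Matrix.det (Matrix.of fun i j : Fin N => x i ^ (N - 1 - (j : ℕ))) *
          Matrix.det (Matrix.of fun k j : Fin N => φ j (x k))
        ∂(Measure.pi fun _ => volume.restrict I))
      = Matrix.det (Matrix.of fun i j : Fin N =>
            ∫ t in I, t ^ (l i + (N - 1 - (i : ℕ))) * φ j t) /
          Matrix.det (Matrix.of fun i j : Fin N =>
            ∫ t in I, t ^ (N - 1 - (i : ℕ)) * φ j t) :=
  polynomial_ensemble_schur_expectation_general N I φ l hmom
end

section
/- For an invertible polynomial ensemble (φ_l(x) = φ(a_l, x) with monic polynomials π_k(a) = ∫_I x^k φ(a,x) dx), the normalizing partition function is Z_N = N! · Δ_N(a_1,...,a_N). -/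
/-!
Writing `Δ_N(x) = (-1)^(N choose 2) det[x_k^i]`, the partition function is an Andréief integral,
`N! · (-1)^(N choose 2) det[∫_I x^i φ(a_l, x) dx] = N! · (-1)^(N choose 2) det[π_i(a_l)]`,
and a matrix of monic polynomials `π_i` of degree `i` evaluated at the `a_l` has the Vandermonde
determinant, since column operations reduce `π_i` to `x^i`.
-/

open MeasureTheory Finset Equiv

/-- The Vandermonde determinant in product form (real variables). -/
def VandR {K : ℕ} (v : Fin K → ℝ) : ℝ := ∏ i : Fin K, ∏ j ∈ Finset.Ioi i, (v i - v j)

theorem Fin.sum_card_Ioi (K : ℕ) : ∑ i : Fin K, #(Ioi i) = K.choose 2 := by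
  simp only [Fin.card_Ioi]
  rw [Fin.sum_univ_eq_sum_range (fun i => K - 1 - i), Finset.sum_range_reflect (fun i => i) K,
    Finset.sum_range_id, Nat.choose_two_right]

theorem VandR_eq_neg_one_pow_mul_det_vandermonde {K : ℕ} (v : Fin K → ℝ) :
    VandR v = (-1) ^ K.choose 2 * (Matrix.vandermonde v).det := by
  have hflip : VandR v = ∏ i : Fin K, ∏ j ∈ Ioi i, (-1 * (v j - v i)) :=
    prod_congr rfl fun _ _ => prod_congr rfl fun _ _ => by ring
  rw [hflip, Matrix.det_vandermonde]
  simp only [prod_mul_distrib, prod_const, prod_pow_eq_pow_sum, Fin.sum_card_Ioi]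

namespace Matrix
variable {ι R : Type*} [Fintype ι] [DecidableEq ι] [CommRing R]

theorem det_eq_sum_sign_mul_prod {α : Type*} (f : ι → α → R) (x : ι → α) :
    (of fun k i => f i (x k)).det = ∑ σ : Perm ι, (Perm.sign σ : R) * ∏ k, f (σ k) (x k) := by
  rw [← det_transpose, det_apply']
  rfl

theorem sum_sign_mul_prod_permute (A : Matrix ι ι R) (σ : Perm ι) :
    ∑ τ : Perm ι, (Perm.sign τ : R) * ∏ k, A (σ k) (τ k) = Perm.sign σ * A.det := by
  rw [← det_permute, ← det_transpose, det_apply']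
  rfl

end Matrix

/-- Andréief's identity. -/
theorem integral_det_mul_det {ι α 𝕜 : Type*} [Fintype ι] [DecidableEq ι] [MeasurableSpace α]
    [RCLike 𝕜] (μ : Measure α) [SigmaFinite μ] (f g : ι → α → 𝕜)
    (hfg : ∀ i j, Integrable (fun x => f i x * g j x) μ) :
    ∫ x : ι → α, (Matrix.of fun k i => f i (x k)).det * (Matrix.of fun k j => g j (x k)).det
        ∂(Measure.pi fun _ => μ)
      = ((Fintype.card ι).factorial : 𝕜) * (Matrix.of fun i j => ∫ x, f i x * g j x ∂μ).det := by
  set A : Matrix ι ι 𝕜 := Matrix.of fun i j => ∫ x, f i x * g j x ∂μ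
  have hexpand : ∀ x : ι → α,
      (Matrix.of fun k i => f i (x k)).det * (Matrix.of fun k j => g j (x k)).det
        = ∑ σ : Perm ι, ∑ τ : Perm ι, (Perm.sign σ : 𝕜) * Perm.sign τ *
            ∏ k, (f (σ k) (x k) * g (τ k) (x k)) := fun x => by
    simp only [Matrix.det_eq_sum_sign_mul_prod, sum_mul_sum, prod_mul_distrib]
    exact sum_congr rfl fun _ _ => sum_congr rfl fun _ _ => by ring
  have hterm : ∀ σ τ : Perm ι, Integrable (fun x : ι → α => (Perm.sign σ : 𝕜) * Perm.sign τ *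
      ∏ k, (f (σ k) (x k) * g (τ k) (x k))) (Measure.pi fun _ => μ) := fun σ τ =>
    (Integrable.fintype_prod fun k => hfg _ _).const_mul _
  have hsign : ∀ σ : Perm ι, (Perm.sign σ : 𝕜) * Perm.sign σ = 1 := fun σ => by
    rw [← Int.cast_mul, ← Units.val_mul, Int.units_mul_self, Units.val_one, Int.cast_one]
  calc _ = ∑ σ : Perm ι, ∑ τ : Perm ι, (Perm.sign σ : 𝕜) * Perm.sign τ * ∏ k, A (σ k) (τ k) := by
        simp_rw [hexpand]
        rw [integral_finsetSum _ fun σ _ => integrable_finsetSum _ fun τ _ => hterm σ τ]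
        refine sum_congr rfl fun σ _ => ?_
        rw [integral_finsetSum _ fun τ _ => hterm σ τ]
        refine sum_congr rfl fun τ _ => ?_
        rw [integral_const_mul, integral_fintype_prod_eq_prod fun k y => f (σ k) y * g (τ k) y]
        rfl
    _ = ∑ _σ : Perm ι, A.det := by
        refine sum_congr rfl fun σ _ => ?_
        simp_rw [mul_assoc, ← mul_sum, Matrix.sum_sign_mul_prod_permute, ← mul_assoc, hsign,
          one_mul]
    _ = _ := by simp [Fintype.card_perm]

theorem invertible_ensemble_partition_function_general (N : ℕ) (I : Set ℝ)
    (φ : ℝ → ℝ → ℝ) (a : Fin N → ℝ)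
    (p : ℕ → Polynomial ℝ) (hmonic : ∀ k, (p k).Monic) (hdeg : ∀ k, (p k).natDegree = k)
    (hrep : ∀ (k : ℕ) (b : ℝ), (p k).eval b = ∫ x in I, x ^ k * φ b x)
    (hmom : ∀ (k : ℕ) (l : Fin N), IntegrableOn (fun x => x ^ k * φ (a l) x) I) :
    (∫ x : Fin N → ℝ,
        VandR x * Matrix.det (Matrix.of fun k l : Fin N => φ (a l) (x k))
        ∂(Measure.pi fun _ => volume.restrict I))
      = N.factorial * VandR a := by
  have hmoments : (Matrix.of fun i l : Fin N => ∫ x in I, x ^ (i : ℕ) * φ (a l) x).det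
      = (Matrix.vandermonde a).det := by
    rw [Matrix.det_eval_matrixOfPolynomials_eq_det_vandermonde a (fun j => p j)
      (fun j => hdeg j) (fun j => hmonic j), ← Matrix.det_transpose]
    congr 1
    ext i l
    exact (hrep l (a i)).symm
  simp_rw [VandR_eq_neg_one_pow_mul_det_vandermonde, mul_assoc]
  rw [integral_const_mul]
  -- `erw`: `vandermonde x` is `of fun k i => x k ^ i` only up to unfolding.
  erw [integral_det_mul_det (volume.restrict I) (fun (i : Fin N) y => y ^ (i : ℕ))
    (fun l y => φ (a l) y) (fun i l => hmom i l)]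
  rw [hmoments, Fintype.card_fin]
  ring

/-- for an invertible polynomial ensemble, i.e. a polynomial ensemble with
`φ_l(x) = φ(a_l, x)` for pairwise distinct real parameters `a_1, ..., a_N` such that
`π_k(a) = ∫_I x^k φ(a,x) dx` is a monic polynomial of degree `k` in `a` for every `k ≥ 0`,
the normalizing partition function
`Z_N = ∫_{I^N} Δ_N(x) det[φ(a_l, x_k)] dx` equals `N! · Δ_N(a_1,...,a_N)`. -/
theorem invertible_ensemble_partition_function (N : ℕ) (I : Set ℝ) (hI : MeasurableSet I)
    (φ : ℝ → ℝ → ℝ) (a : Fin N → ℝ) (ha : Function.Injective a)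
    (p : ℕ → Polynomial ℝ) (hmonic : ∀ k, (p k).Monic) (hdeg : ∀ k, (p k).natDegree = k)
    (hrep : ∀ (k : ℕ) (b : ℝ), (p k).eval b = ∫ x in I, x ^ k * φ b x)
    (hmom : ∀ (k : ℕ) (l : Fin N), IntegrableOn (fun x => x ^ k * φ (a l) x) I)
    (hint : Integrable
      (fun x : Fin N → ℝ =>
        VandR x * Matrix.det (Matrix.of fun k l : Fin N => φ (a l) (x k)))
      (Measure.pi fun _ => volume.restrict I)) :
    (∫ x : Fin N → ℝ,
        VandR x * Matrix.det (Matrix.of fun k l : Fin N => φ (a l) (x k))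
        ∂(Measure.pi fun _ => volume.restrict I))
      = N.factorial * VandR a :=
  invertible_ensemble_partition_function_general N I φ a p hmonic hdeg hrep hmom
end
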